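/- arXiv:2211.00536 — 7 statements merged into one kernel-verified Lean document; each statement's English description precedes it below -/
import Mathlib

section
/- The number of classical parking functions of length n is (n+1)^(n-1). That is, the number of vectors (a_1,...,a_n) in [n]^n such that the nondecreasing rearrangement b_1 ≤ ... ≤ b_n satisfies b_i ≤ i for all i equals (n+1)^(n-1). -/
open Finset



section Parking

variable (n : ℕ)

/-- count of cars with value in the cyclic window `[u, u+m)`. -/
def pkcnt (g : Fin n → ZMod (n + 1)) (u m : ℕ) : ℕ :=
  ((univ : Finset (Fin n)).filter fun k => (g k - (u : ZMod (n + 1))).val < m).card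

/-- prefix-sum defect function. -/
def pkf (g : Fin n → ZMod (n + 1)) (u : ℕ) : ℤ := (pkcnt n g 0 u : ℤ) - u

def GoodAt (g : Fin n → ZMod (n + 1)) (u : ℕ) : Prop :=
  ∀ m, 1 ≤ m → m ≤ n → m ≤ pkcnt n g u m

def Good (h : Fin n → ZMod (n + 1)) : Prop := GoodAt n h 0

variable {n}

lemma pk_key (x : ZMod (n + 1)) {a b : ℕ} (ha : a ≤ n) (hab : a + b ≤ n + 1) :
    (x.val < a + b ↔ (x.val < a ∨ (x - (a : ZMod (n + 1))).val < b)) ∧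
      ¬(x.val < a ∧ (x - (a : ZMod (n + 1))).val < b) := by
  set v := x.val with hv
  set w := (x - (a : ZMod (n + 1))).val with hw
  have hvn : v < n + 1 := ZMod.val_lt x
  have hwn : w < n + 1 := ZMod.val_lt _
  have e : x = (x - (a : ZMod (n + 1))) + (a : ZMod (n + 1)) := by ring
  have hval : v = (w + a) % (n + 1) := by
    rw [hv]
    conv_lhs => rw [e]
    rw [ZMod.val_add, ← hw, ZMod.val_cast_of_lt (by omega)]
  rcases Nat.lt_or_ge (w + a) (n + 1) with h | h
  · rw [Nat.mod_eq_of_lt h] at hval; omega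
  · rw [Nat.mod_eq_sub_mod h, Nat.mod_eq_of_lt (by omega)] at hval; omega

lemma pkcnt_zero (g : Fin n → ZMod (n + 1)) (u : ℕ) : pkcnt n g u 0 = 0 := by
  simp [pkcnt]

lemma pkcnt_split (g : Fin n → ZMod (n + 1)) (u a b : ℕ) (hab : a + b ≤ n + 1) :
    pkcnt n g u (a + b) = pkcnt n g u a + pkcnt n g (u + a) b := by
  rcases Nat.eq_zero_or_pos b with hb | hb
  · subst hb; simp [pkcnt_zero]
  have ha : a ≤ n := by omega
  unfold pkcnt
  have hrw : ∀ k : Fin n, g k - ((u + a : ℕ) : ZMod (n + 1)) =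
      (g k - (u : ZMod (n + 1))) - (a : ZMod (n + 1)) := by
    intro k; push_cast; ring
  have hfe : ((univ : Finset (Fin n)).filter fun k => (g k - (u : ZMod (n + 1))).val < a + b) =
      (univ : Finset (Fin n)).filter fun k =>
        ((g k - (u : ZMod (n + 1))).val < a ∨ (g k - ((u + a : ℕ) : ZMod (n + 1))).val < b) := by
    apply Finset.filter_congr
    intro k _
    rw [hrw k]
    exact (pk_key (g k - (u : ZMod (n + 1))) ha hab).1
  rw [hfe, Finset.filter_or, Finset.card_union_of_disjoint]
  rw [Finset.disjoint_left]
  intro k h1 h2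
  simp only [Finset.mem_filter, Finset.mem_univ, true_and] at h1 h2
  rw [hrw k] at h2
  exact (pk_key (g k - (u : ZMod (n + 1))) ha hab).2 ⟨h1, h2⟩

lemma pkcnt_full (g : Fin n → ZMod (n + 1)) (u : ℕ) : pkcnt n g u (n + 1) = n := by
  unfold pkcnt
  rw [Finset.filter_true_of_mem (fun k _ => ZMod.val_lt _)]
  simp

lemma pkcnt_period (g : Fin n → ZMod (n + 1)) (m : ℕ) : pkcnt n g (n + 1) m = pkcnt n g 0 m := by
  unfold pkcnt
  congr 1
  apply Finset.filter_congr
  intro k _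
  rw [show (((n : ℕ) + 1 : ℕ) : ZMod (n + 1)) = ((0 : ℕ) : ZMod (n + 1)) by
    push_cast [ZMod.natCast_self]; simp]

lemma pkf_zero (g : Fin n → ZMod (n + 1)) : pkf n g 0 = 0 := by
  simp [pkf, pkcnt_zero]

lemma pkf_top (g : Fin n → ZMod (n + 1)) : pkf n g (n + 1) = -1 := by
  simp [pkf, pkcnt_full]

lemma pk_iff_low (g : Fin n → ZMod (n + 1)) {u m : ℕ} (h1 : u + m ≤ n + 1) :
    (m ≤ pkcnt n g u m) ↔ pkf n g u ≤ pkf n g (u + m) := by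
  have hs := pkcnt_split g 0 u m (by omega)
  rw [Nat.zero_add] at hs
  unfold pkf
  omega

lemma pk_iff_high (g : Fin n → ZMod (n + 1)) {u m : ℕ} (hu : u ≤ n) (hm : m ≤ n)
    (h1 : n + 1 < u + m) :
    (m ≤ pkcnt n g u m) ↔ pkf n g u < pkf n g (u + m - (n + 1)) := by
  set r := u + m - (n + 1) with hr
  have e1 := pkcnt_split g 0 u (n + 1 - u) (by omega)
  rw [Nat.zero_add, show u + (n + 1 - u) = n + 1 by omega, pkcnt_full] at e1
  have e2 := pkcnt_split g u (n + 1 - u) r (by omega)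
  rw [show n + 1 - u + r = m by omega, show u + (n + 1 - u) = n + 1 by omega,
    pkcnt_period] at e2
  unfold pkf
  omega

/-- Existence and uniqueness of the good rotation offset. -/
lemma existsUnique_goodAt (g : Fin n → ZMod (n + 1)) :
    ∃! u : ℕ, u ≤ n ∧ GoodAt n g u := by
  -- existence: first minimizer of pkf on [0, n]
  have hex : ∃ u : ℕ, u ≤ n ∧ ∀ v ≤ n, pkf n g u ≤ pkf n g v := by
    obtain ⟨u, hu, hmin⟩ := Finset.exists_min_image (Finset.range (n + 1)) (pkf n g)
      ⟨0, Finset.mem_range.2 (by omega)⟩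
    exact ⟨u, by have := Finset.mem_range.1 hu; omega,
      fun v hv => hmin v (Finset.mem_range.2 (by omega))⟩
  classical
  set u₀ := Nat.find hex with hu₀
  obtain ⟨hu₀n, hmin⟩ := Nat.find_spec hex
  have hfirst : ∀ r, r < u₀ → pkf n g u₀ < pkf n g r := by
    intro r hr
    have hnr : ¬(r ≤ n ∧ ∀ v ≤ n, pkf n g r ≤ pkf n g v) := Nat.find_min hex hr
    push_neg at hnr
    obtain ⟨v, hv, hvlt⟩ := hnr (by omega)
    exact lt_of_le_of_lt (hmin v hv) hvlt
  have hneg : 1 ≤ u₀ → pkf n g u₀ ≤ -1 := by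
    intro h
    have := hfirst 0 h
    rw [pkf_zero] at this
    omega
  have hgood : GoodAt n g u₀ := by
    intro m h1 hm
    rcases le_or_gt (u₀ + m) (n + 1) with h | h
    · rw [pk_iff_low g h]
      rcases le_or_gt (u₀ + m) n with h' | h'
      · exact hmin _ h'
      · have : u₀ + m = n + 1 := by omega
        rw [this, pkf_top]
        exact hneg (by omega)
    · rw [pk_iff_high g hu₀n hm h]
      exact hfirst _ (by omega)
  refine ⟨u₀, ⟨hu₀n, hgood⟩, ?_⟩
  -- uniqueness
  have key : ∀ u u' : ℕ, u ≤ n → u' ≤ n → GoodAt n g u → GoodAt n g u' → u < u' → False := by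
    intro u u' hu hu' hg hg' hlt
    have h1 : pkf n g u ≤ pkf n g u' := by
      have := hg (u' - u) (by omega) (by omega)
      rw [pk_iff_low g (by omega), show u + (u' - u) = u' by omega] at this
      exact this
    have h2 := hg' (u + (n + 1) - u') (by omega) (by omega)
    rcases Nat.eq_zero_or_pos u with h0 | h0
    · rw [pk_iff_low g (by omega), show u' + (u + (n + 1) - u') = n + 1 by omega,
        pkf_top] at h2
      rw [h0, pkf_zero] at h1
      omega
    · rw [pk_iff_high g hu' (by omega) (by omega),
        show u' + (u + (n + 1) - u') - (n + 1) = u by omega] at h2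
      omega
  intro u ⟨hun, hug⟩
  rcases Nat.lt_trichotomy u u₀ with h | h | h
  · exact absurd (key u u₀ hun hu₀n hug hgood h) (by simp)
  · exact h
  · exact absurd (key u₀ u hu₀n hun hgood hug h) (by simp)

end Parking

section Shift

variable {n : ℕ}

lemma goodAt_iff_good (g : Fin n → ZMod (n + 1)) (u : ℕ) :
    GoodAt n g u ↔ Good n (fun k => g k - (u : ZMod (n + 1))) := by
  unfold Good GoodAt pkcnt
  simp

lemma existsUnique_shift (g : Fin n → ZMod (n + 1)) :
    ∃! t : ZMod (n + 1), Good n (fun k => g k + t) := by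
  obtain ⟨u, ⟨hun, hug⟩, huniq⟩ := existsUnique_goodAt g
  have cast_neg_val : ∀ t : ZMod (n + 1), (((-t).val : ℕ) : ZMod (n + 1)) = -t := by
    intro t
    rw [ZMod.natCast_val, ZMod.cast_id]
  refine ⟨-(u : ZMod (n + 1)), ?_, ?_⟩
  · have : (fun k => g k + -(u : ZMod (n + 1))) = fun k => g k - (u : ZMod (n + 1)) := by
      funext k; ring
    show Good n fun k => g k + -(u : ZMod (n+1))
    rw [this]
    exact (goodAt_iff_good g u).1 hug
  · intro t ht
    have hgt : GoodAt n g ((-t).val) := by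
      rw [goodAt_iff_good]
      have : (fun k => g k - (((-t).val : ℕ) : ZMod (n + 1))) = fun k => g k + t := by
        funext k; rw [cast_neg_val]; ring
      rw [this]
      exact ht
    have huv : (-t).val = u := huniq _ ⟨by have := ZMod.val_lt (-t); omega, hgt⟩
    have : -t = (u : ZMod (n + 1)) := by rw [← huv, cast_neg_val]
    rw [← neg_neg t, this]

noncomputable def shiftOf (g : Fin n → ZMod (n + 1)) : ZMod (n + 1) :=
  (existsUnique_shift g).exists.choose

lemma shiftOf_spec (g : Fin n → ZMod (n + 1)) : Good n (fun k => g k + shiftOf g) :=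
  (existsUnique_shift g).exists.choose_spec

lemma shiftOf_eq (g : Fin n → ZMod (n + 1)) {t : ZMod (n + 1)}
    (ht : Good n (fun k => g k + t)) : shiftOf g = t :=
  (existsUnique_shift g).unique (shiftOf_spec g) ht

noncomputable def shiftEquiv (n : ℕ) :
    (Fin n → ZMod (n + 1)) ≃ ZMod (n + 1) × {h : Fin n → ZMod (n + 1) // Good n h} where
  toFun g := (shiftOf g, ⟨fun k => g k + shiftOf g, shiftOf_spec g⟩)
  invFun p := fun k => p.2.1 k - p.1
  left_inv g := by funext k; simp
  right_inv := by
    rintro ⟨s, h, hh⟩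
    have hs : shiftOf (fun k => h k - s) = s := by
      apply shiftOf_eq
      have : (fun k => (fun k => h k - s) k + s) = h := by funext k; ring
      rw [this]
      exact hh
    refine Prod.ext (by simp [hs]) ?_
    apply Subtype.ext
    show (fun k => (h k - s) + shiftOf (fun k => h k - s)) = h
    funext k
    rw [hs]
    ring

lemma card_good (n : ℕ) :
    Nat.card {h : Fin n → ZMod (n + 1) // Good n h} = (n + 1) ^ (n - 1) := by
  have h1 : Nat.card (Fin n → ZMod (n + 1)) = (n + 1) ^ n := by
    rw [Nat.card_eq_fintype_card, Fintype.card_fun, ZMod.card, Fintype.card_fin]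
  have h2 := Nat.card_congr (shiftEquiv n)
  rw [h1, Nat.card_prod, Nat.card_eq_fintype_card (α := ZMod (n + 1)), ZMod.card] at h2
  rcases Nat.eq_zero_or_pos n with h0 | h0
  · subst h0
    simpa using h2.symm
  · have : (n + 1) ^ n = (n + 1) * (n + 1) ^ (n - 1) := by
      rw [← pow_succ']
      congr 1
      omega
    rw [this] at h2
    exact (Nat.eq_of_mul_eq_mul_left (by omega) h2).symm

end Shift

section Bridge

variable {n : ℕ}

def PkCount (n : ℕ) (α : Fin n → Fin n) : Prop :=
  ∀ m, 1 ≤ m → m ≤ n → m ≤ ((univ : Finset (Fin n)).filter fun k => (α k : ℕ) < m).card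

lemma card_filter_val_lt {m : ℕ} (hm : m ≤ n) :
    ((univ : Finset (Fin n)).filter fun j : Fin n => (j : ℕ) < m).card = m := by
  rcases eq_or_lt_of_le hm with h | h
  · subst h
    rw [Finset.filter_true_of_mem (fun j _ => j.isLt)]
    simp
  · have : ((univ : Finset (Fin n)).filter fun j : Fin n => (j : ℕ) < m) = Iio (⟨m, h⟩ : Fin n) := by
      ext j
      simp [Fin.lt_def]
    rw [this, Fin.card_Iio]

lemma card_filter_perm (σ : Equiv.Perm (Fin n)) (p : Fin n → Prop) [DecidablePred p] :
    ((univ : Finset (Fin n)).filter fun k => p (σ k)).card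
      = ((univ : Finset (Fin n)).filter p).card := by
  apply Finset.card_bij (fun k _ => σ k)
  · intro k hk
    simp only [Finset.mem_filter, Finset.mem_univ, true_and] at hk ⊢
    exact hk
  · intro k₁ _ k₂ _ h
    exact σ.injective h
  · intro y hy
    refine ⟨σ.symm y, ?_, by simp⟩
    simp only [Finset.mem_filter, Finset.mem_univ, true_and] at hy ⊢
    simpa using hy

lemma pf_iff_count (α : Fin n → Fin n) :
    (∃ σ : Equiv.Perm (Fin n), Monotone (α ∘ σ) ∧ ∀ i : Fin n, (α (σ i) : ℕ) ≤ (i : ℕ))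
      ↔ PkCount n α := by
  constructor
  · rintro ⟨σ, _, hle⟩ m h1 hm
    calc m = ((univ : Finset (Fin n)).filter fun j : Fin n => (j : ℕ) < m).card :=
          (card_filter_val_lt hm).symm
      _ ≤ ((univ : Finset (Fin n)).filter fun k => (α k : ℕ) < m).card := by
          apply Finset.card_le_card_of_injOn (fun j => σ j)
          · intro j hj
            simp only [Finset.mem_coe, Finset.mem_filter, Finset.mem_univ, true_and] at hj ⊢
            exact lt_of_le_of_lt (hle j) hj
          · exact fun a _ b _ h => σ.injective h
  · intro hc
    refine ⟨Tuple.sort α, Tuple.monotone_sort α, ?_⟩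
    intro i
    by_contra hcon
    push_neg at hcon
    set σ := Tuple.sort α with hσ
    have hmono := Tuple.monotone_sort α
    have hm : (i : ℕ) + 1 ≤ n := i.isLt
    have h1 := hc ((i : ℕ) + 1) (by omega) hm
    rw [← card_filter_perm σ (fun k => (α k : ℕ) < (i : ℕ) + 1)] at h1
    have hsub : ((univ : Finset (Fin n)).filter fun k => (α (σ k) : ℕ) < (i : ℕ) + 1)
        ⊆ (univ : Finset (Fin n)).filter fun k : Fin n => (k : ℕ) < (i : ℕ) := by
      intro k hk
      simp only [Finset.mem_filter, Finset.mem_univ, true_and] at hk ⊢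
      by_contra hik
      push_neg at hik
      have : α (σ i) ≤ α (σ k) := hmono (by rwa [Fin.le_def])
      rw [Fin.le_def] at this
      omega
    have h2 := Finset.card_le_card hsub
    rw [card_filter_val_lt (by omega)] at h2
    omega

lemma good_val_lt {h : Fin n → ZMod (n + 1)} (hg : Good n h) (k : Fin n) : (h k).val < n := by
  have hn : 1 ≤ n := by
    rcases Nat.eq_zero_or_pos n with h0 | h0
    · exact absurd k.isLt (by omega)
    · exact h0
  have := hg n hn le_rfl
  unfold pkcnt at this
  have hall : ((univ : Finset (Fin n)).filter
      fun k => (h k - ((0 : ℕ) : ZMod (n + 1))).val < n) = univ := by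
    apply Finset.eq_univ_of_card
    have hle : ((univ : Finset (Fin n)).filter
        fun k => (h k - ((0 : ℕ) : ZMod (n + 1))).val < n).card ≤ n := by
      calc _ ≤ (univ : Finset (Fin n)).card := Finset.card_filter_le _ _
        _ = n := by simp
    simp only [Fintype.card_fin]
    omega
  have hk := Finset.mem_filter.1 (hall ▸ Finset.mem_univ k)
  simpa using hk.2

noncomputable def countEquiv (n : ℕ) :
    {α : Fin n → Fin n // PkCount n α} ≃ {h : Fin n → ZMod (n + 1) // Good n h} where
  toFun α := ⟨fun k => ((α.1 k : ℕ) : ZMod (n + 1)), by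
    intro m h1 hm
    unfold pkcnt
    have hcnt := α.2 m h1 hm
    calc m ≤ ((univ : Finset (Fin n)).filter fun k => (α.1 k : ℕ) < m).card := hcnt
      _ = _ := by
        congr 1
        apply Finset.filter_congr
        intro k _
        rw [Nat.cast_zero, sub_zero, ZMod.val_cast_of_lt (by have := (α.1 k).isLt; omega)]⟩
  invFun h := ⟨fun k => ⟨(h.1 k).val, good_val_lt h.2 k⟩, by
    intro m h1 hm
    have := h.2 m h1 hm
    unfold pkcnt at this
    calc m ≤ _ := this
      _ = ((univ : Finset (Fin n)).filter fun k => ((h.1 k).val : ℕ) < m).card := by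
        congr 1
        apply Finset.filter_congr
        intro k _
        rw [Nat.cast_zero, sub_zero]⟩
  left_inv α := by
    apply Subtype.ext
    funext k
    apply Fin.ext
    simp only
    rw [ZMod.val_cast_of_lt (by have := (α.1 k).isLt; omega)]
  right_inv h := by
    apply Subtype.ext
    funext k
    simp only
    rw [ZMod.natCast_val, ZMod.cast_id]

end Bridge


/-- **Theorem (Pollak / Konheim–Weiss).** The number of classical parking functions of
length `n` is `(n+1)^(n-1)`: the number of vectors `(a_1,...,a_n) ∈ [n]^n` whose
nondecreasing rearrangement `b_1 ≤ ... ≤ b_n` satisfies `b_i ≤ i` for all `i` equals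
`(n+1)^(n-1)`.  Here `α k : Fin n` encodes the preference `a_{k+1} = (α k) + 1 ∈ [n]`,
and the rearrangement is encoded by a permutation `σ` making `α ∘ σ` monotone with
`(α (σ i)) + 1 ≤ i + 1`, i.e. `(α (σ i) : ℕ) ≤ (i : ℕ)`. -/
theorem card_parking_functions (n : ℕ) :
    Nat.card {α : Fin n → Fin n //
        ∃ σ : Equiv.Perm (Fin n), Monotone (α ∘ σ) ∧ ∀ i : Fin n, (α (σ i) : ℕ) ≤ (i : ℕ)}
      = (n + 1) ^ (n - 1) := by
  have e1 : {α : Fin n → Fin n //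
      ∃ σ : Equiv.Perm (Fin n), Monotone (α ∘ σ) ∧ ∀ i : Fin n, (α (σ i) : ℕ) ≤ (i : ℕ)}
      ≃ {α : Fin n → Fin n // PkCount n α} :=
    Equiv.subtypeEquivRight fun α => pf_iff_count α
  rw [Nat.card_congr e1, Nat.card_congr (countEquiv n), card_good n]
end

section
/- Abel's identity special case: for all real (or natural) x, y > 0 and n ≥ 0, the sum over s from 0 to n of C(n,s) (x+s)^(s-1) (y+n-s)^(n-s-1) equals (1/x + 1/y)(x+y+n)^(n-1). -/
/-!
Since `(x + s) + (y + n - s) = x + y + n`, multiplying `A_n(x,y;-1,-1)` by `x + y + n` gives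
`A_n(x,y;0,-1) + A_n(x,y;-1,0)`, and the reflection `s ↦ n - s` turns the first summand into
`A_n(y,x;-1,0)`. Everything thus reduces to Abel's identity `A_n(x,y;-1,0) = x⁻¹ (x+y+n)^n`,
proved by induction on `n`: `∂/∂y A_{n+1}(x,y;-1,0) = (n+1) A_n(x,y+1;-1,0)`, which by induction
is the `y`-derivative of the right-hand side, and at `y = -x-n-1` the left-hand side is, up to
sign, an `(n+1)`-st forward difference of `t ↦ t^n`, hence zero.
-/

open Finset

theorem sum_neg_one_pow_mul_choose_mul_add_pow_eq_zero {R : Type*} [CommRing R] {j m : ℕ}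
    (h : j < m) (x : R) : ∑ k ∈ range (m + 1), (-1) ^ (m - k) * m.choose k * (x + k) ^ j = 0 := by
  have := congrFun (fwdDiff_iter_pow_eq_zero_of_lt (R := R) h) x
  rw [fwdDiff_iter_eq_sum_shift] at this
  simpa [zsmul_eq_mul] using this

/-- `abelSum n x y p q` is `A_n(x,y;p,q)`. -/
noncomputable def abelSum (n : ℕ) (x y : ℝ) (p q : ℤ) : ℝ :=
  ∑ s ∈ range (n + 1), (n.choose s : ℝ) * (x + s) ^ ((s : ℤ) + p) * (y + n - s) ^ ((n : ℤ) - s + q)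

theorem abelSum_zero_right (n : ℕ) (x y : ℝ) (p : ℤ) :
    abelSum n x y p 0 =
      ∑ s ∈ range (n + 1), (n.choose s : ℝ) * (x + s) ^ ((s : ℤ) + p) * (y + n - s) ^ (n - s) := by
  refine sum_congr rfl fun s hs => ?_
  rw [add_zero, ← Nat.cast_sub (R := ℤ) (mem_range_succ_iff.mp hs), zpow_natCast]

theorem abelSum_comm (n : ℕ) (x y : ℝ) (p q : ℤ) : abelSum n x y p q = abelSum n y x q p := by
  rw [abelSum, ← sum_range_reflect]
  refine sum_congr rfl fun s hs => ?_
  replace hs : s ≤ n := mem_range_succ_iff.mp hs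
  rw [Nat.add_sub_cancel, Nat.choose_symm hs]
  push_cast [Nat.cast_sub hs]
  rw [show x + (n - s : ℝ) = x + n - s by ring, show y + n - (n - s : ℝ) = y + s by ring,
    show (n : ℤ) - (n - s) + q = s + q by ring]
  ring

theorem mul_abelSum {n : ℕ} {x y : ℝ} (hx : ∀ s ≤ n, x + s ≠ 0) (hy : ∀ s ≤ n, y + s ≠ 0)
    (p q : ℤ) :
    (x + y + n) * abelSum n x y p q = abelSum n x y (p + 1) q + abelSum n x y p (q + 1) := by
  rw [abelSum, mul_sum, abelSum, abelSum, ← sum_add_distrib]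
  refine sum_congr rfl fun s hs => ?_
  replace hs : s ≤ n := mem_range_succ_iff.mp hs
  have hy' : y + n - s ≠ 0 := by simpa [Nat.cast_sub hs, add_sub_assoc] using hy (n - s) (by omega)
  rw [← add_assoc, ← add_assoc, zpow_add_one₀ (hx s hs), zpow_add_one₀ hy']
  ring

theorem abelSum_neg_one_zero_eq_zero {n : ℕ} (hn : 0 < n) {x : ℝ} (hx : ∀ s ≤ n, x + s ≠ 0) :
    abelSum n x (-x - n) (-1) 0 = 0 := by
  rw [abelSum_zero_right,
    ← sum_neg_one_pow_mul_choose_mul_add_pow_eq_zero (Nat.sub_one_lt hn.ne') x]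
  refine sum_congr rfl fun s hs => ?_
  replace hs : s ≤ n := mem_range_succ_iff.mp hs
  have hpow : (x + s) ^ ((s : ℤ) + -1) * (x + s) ^ (n - s) = (x + s) ^ (n - 1) := by
    rw [← zpow_natCast, ← zpow_natCast, ← zpow_add₀ (hx s hs)]
    congr 1
    push_cast [Nat.cast_sub hs, Nat.cast_sub hn]
    ring
  rw [show -x - n + n - s = -(x + s) by ring, neg_pow, ← hpow]
  ring

theorem hasDerivAt_abelSum_zero_right (n : ℕ) (x : ℝ) (p : ℤ) (y : ℝ) :
    HasDerivAt (fun y => abelSum (n + 1) x y p 0) ((n + 1) * abelSum n x (y + 1) p 0) y := by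
  simp only [abelSum_zero_right]
  refine (HasDerivAt.fun_sum fun (s : ℕ) _ =>
    ((((hasDerivAt_id' y).add_const ((n + 1 : ℕ) : ℝ)).sub_const (s : ℝ)).fun_pow (n + 1 - s)
      |>.const_mul (((n + 1).choose s : ℝ) * (x + s) ^ ((s : ℤ) + p)))).congr_deriv ?_
  rw [sum_range_succ, Nat.sub_self, Nat.cast_zero, zero_mul, zero_mul, mul_zero, add_zero, mul_sum]
  refine sum_congr rfl fun s hs => ?_
  replace hs : s ≤ n := mem_range_succ_iff.mp hs
  have hchoose : ((n + 1).choose s : ℝ) * (n + 1 - s : ℕ) = (n + 1) * n.choose s := by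
    exact_mod_cast (Nat.choose_mul_succ_eq n s).symm.trans (mul_comm _ _)
  rw [show n + 1 - s - 1 = n - s by omega]
  push_cast
  linear_combination (x + s) ^ ((s : ℤ) + p) * (y + 1 + n - s) ^ (n - s) * hchoose

theorem abelSum_neg_one_zero (n : ℕ) {x : ℝ} (hx : ∀ s ≤ n, x + s ≠ 0) (y : ℝ) :
    abelSum n x y (-1) 0 = x⁻¹ * (x + y + n) ^ n := by
  induction n generalizing y with
  | zero => simp [abelSum]
  | succ n ih =>
    set G : ℝ → ℝ := fun y => x⁻¹ * (x + y + (n + 1 : ℕ)) ^ (n + 1)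
    have hG : ∀ y, HasDerivAt G ((n + 1) * (x⁻¹ * (x + (y + 1) + n) ^ n)) y := by
      intro y
      refine ((((hasDerivAt_id' y).const_add x).add_const ((n + 1 : ℕ) : ℝ)).fun_pow (n + 1)
        |>.const_mul x⁻¹).congr_deriv ?_
      push_cast
      ring
    have hconst : ∀ y, HasDerivAt (fun y => abelSum (n + 1) x y (-1) 0 - G y) 0 y := by
      intro y
      have := (hasDerivAt_abelSum_zero_right n x (-1) y).sub (hG y)
      rwa [ih (fun s hs => hx s (by omega)), sub_self] at this
    have hroot : abelSum (n + 1) x (-x - (n + 1 : ℕ)) (-1) 0 - G (-x - (n + 1 : ℕ)) = 0 := by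
      rw [abelSum_neg_one_zero_eq_zero n.succ_pos hx]
      simp only [G]
      rw [show x + (-x - (n + 1 : ℕ)) + (n + 1 : ℕ) = 0 by ring, zero_pow n.succ_ne_zero,
        mul_zero, sub_self]
    have := is_const_of_deriv_eq_zero (fun y => (hconst y).differentiableAt)
      (fun y => (hconst y).deriv) y (-x - (n + 1 : ℕ))
    rwa [hroot, sub_eq_zero] at this

/-- **Abel's identity, special case `A_n(x,y;-1,-1)`.** For `x, y > 0` and `n ≥ 0`,
`Σ_{s=0}^n C(n,s) (x+s)^(s-1) (y+n-s)^(n-s-1) = (1/x + 1/y)(x+y+n)^(n-1)`. -/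
theorem abel_neg_one_neg_one (n : ℕ) (x y : ℝ) (hx : 0 < x) (hy : 0 < y) :
    ∑ s ∈ Finset.range (n + 1),
        (n.choose s : ℝ) * (x + s) ^ ((s : ℤ) - 1) * (y + n - s) ^ ((n : ℤ) - s - 1)
      = (x⁻¹ + y⁻¹) * (x + y + n) ^ ((n : ℤ) - 1) := by
  have hx' : ∀ s ≤ n, x + s ≠ 0 := fun s _ => by positivity
  have hy' : ∀ s ≤ n, y + s ≠ 0 := fun s _ => by positivity
  have hS : x + y + n ≠ 0 := by positivity
  have hrec := mul_abelSum hx' hy' (-1) (-1)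
  rw [neg_add_cancel, abelSum_comm n x y 0, abelSum_neg_one_zero n hy',
    abelSum_neg_one_zero n hx'] at hrec
  change abelSum n x y (-1) (-1) = _
  rw [zpow_sub_one₀ hS, zpow_natCast, ← mul_assoc, eq_mul_inv_iff_mul_eq₀ hS]
  linear_combination hrec
end

section
/- Under the probabilistic parking protocol with forward probability p on a one-way street with n spots, the probability that a uniformly random preference vector α ∈ [n]^n is a parking function equals (n+1)^(n-1)/n^n, independently of p. -/
open Finset

/-- One step of the probabilistic parking protocol on a one-way street with `n` spots:
a car with preference `a` parks there if it is empty; otherwise it moves forward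
(if `fwd = true`) or backward (if `fwd = false`), parking at the nearest empty spot
in that direction, and fails (`none`) if there is none. -/
def linPark (n : ℕ) (occ : Finset (Fin n)) (a : Fin n) (fwd : Bool) : Option (Fin n) :=
  if a ∉ occ then some a
  else
    let cand : Finset (Fin n) := Finset.univ.filter fun s => (if fwd then a < s else s < a) ∧ s ∉ occ
    if h : cand.Nonempty then some (if fwd then cand.min' h else cand.max' h) else none

/-- Run the protocol for all `m` cars (in order), given preferences `α` and coin flips `c`;
returns `none` if some car fails to park. -/
def linRun (n m : ℕ) (α : Fin m → Fin n) (c : Fin m → Bool) : Option (Finset (Fin n)) :=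
  (List.finRange m).foldl
    (fun st i => st.bind fun occ => (linPark n occ (α i) (c i)).map fun s => insert s occ)
    (some ∅)

/-- All `m` cars manage to park. -/
def linParks (n m : ℕ) (α : Fin m → Fin n) (c : Fin m → Bool) : Prop :=
  (linRun n m α c).isSome = true

instance (n m : ℕ) (α : Fin m → Fin n) (c : Fin m → Bool) : Decidable (linParks n m α c) := by
  unfold linParks; infer_instance

/-- Probability of a given vector of coin flips, each flip independently heads with
probability `p`. -/
def coinWeight (p : ℝ) {m : ℕ} (c : Fin m → Bool) : ℝ := ∏ i, if c i then p else 1 - p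

namespace ParkingProof

open Classical in
/-- Circular parking: first empty spot starting from `a` moving in direction `d`. -/
noncomputable def cP {N : ℕ} (occ : Finset (ZMod N)) (a d : ZMod N) : ZMod N :=
  if h : ∃ k : ℕ, a + d * (k : ZMod N) ∉ occ then a + d * ((Nat.find h : ℕ) : ZMod N) else a

lemma cP_eq {N : ℕ} {occ : Finset (ZMod N)} {a d : ZMod N} {k : ℕ}
    (hk : a + d * (k : ZMod N) ∉ occ) (hmin : ∀ j < k, a + d * (j : ZMod N) ∈ occ) :
    cP occ a d = a + d * (k : ZMod N) := by
  classical
  rw [cP, dif_pos ⟨k, hk⟩]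
  have hfind : Nat.find (⟨k, hk⟩ : ∃ k : ℕ, a + d * (k : ZMod N) ∉ occ) = k :=
    (Nat.find_eq_iff _).mpr ⟨hk, fun j hj hno => hno (hmin j hj)⟩
  rw [hfind]

lemma cP_not_mem {N : ℕ} {occ : Finset (ZMod N)} {a d : ZMod N}
    (h : ∃ k : ℕ, a + d * (k : ZMod N) ∉ occ) : cP occ a d ∉ occ := by
  classical
  rw [cP, dif_pos h]
  exact Nat.find_spec h

lemma cP_self {N : ℕ} {occ : Finset (ZMod N)} {a d : ZMod N} (ha : a ∉ occ) :
    cP occ a d = a := by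
  have := cP_eq (occ := occ) (a := a) (d := d) (k := 0) (by simpa using ha)
    (fun j hj => absurd hj (Nat.not_lt_zero j))
  simpa using this

lemma cP_mem_insert {N : ℕ} (occ : Finset (ZMod N)) (a d : ZMod N) :
    a ∈ insert (cP occ a d) occ := by
  by_cases ha : a ∈ occ
  · exact mem_insert_of_mem ha
  · rw [cP_self ha]; exact mem_insert_self _ _

lemma mem_image_addt {N : ℕ} {occ : Finset (ZMod N)} {x t : ZMod N} :
    x + t ∈ occ.image (· + t) ↔ x ∈ occ := by
  simp [Finset.mem_image]

lemma cP_shift {N : ℕ} (occ : Finset (ZMod N)) (a d t : ZMod N) :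
    cP (occ.image (· + t)) (a + t) d = cP occ a d + t := by
  classical
  by_cases h : ∃ k : ℕ, a + d * (k : ZMod N) ∉ occ
  · obtain ⟨K, hK1, hK2⟩ : ∃ K : ℕ, (a + d * (K : ZMod N) ∉ occ) ∧
        ∀ j < K, a + d * (j : ZMod N) ∈ occ := by
      refine ⟨Nat.find h, Nat.find_spec h, fun j hj => ?_⟩
      have := Nat.find_min h hj; simpa using this
    have h1 : cP occ a d = a + d * (K : ZMod N) := cP_eq hK1 hK2
    have h2 : cP (occ.image (· + t)) (a + t) d = (a + t) + d * (K : ZMod N) := by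
      refine cP_eq ?_ ?_
      · rw [add_right_comm]; rw [mem_image_addt]; exact hK1
      · intro j hj; rw [add_right_comm, mem_image_addt]; exact hK2 j hj
    rw [h1, h2]; ring
  · have h' : ¬ ∃ k : ℕ, (a + t) + d * (k : ZMod N) ∉ occ.image (· + t) := by
      push_neg at h ⊢
      intro k; rw [add_right_comm, mem_image_addt]; exact h k
    rw [cP, dif_neg h', cP, dif_neg h]

/-- Circular run of the first `m` cars. -/
noncomputable def cRun {N : ℕ} : (m : ℕ) → (Fin m → ZMod N) → (Fin m → Bool) → Finset (ZMod N)
  | 0, _, _ => ∅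
  | m + 1, β, c =>
      let occ := cRun m (β ∘ Fin.castSucc) (c ∘ Fin.castSucc)
      insert (cP occ (β (Fin.last m)) (if c (Fin.last m) then 1 else -1)) occ

lemma cRun_succ {N : ℕ} (m : ℕ) (β : Fin (m+1) → ZMod N) (c : Fin (m+1) → Bool) :
    cRun (m+1) β c = insert (cP (cRun m (β ∘ Fin.castSucc) (c ∘ Fin.castSucc))
      (β (Fin.last m)) (if c (Fin.last m) then 1 else -1))
      (cRun m (β ∘ Fin.castSucc) (c ∘ Fin.castSucc)) := rfl

lemma cRun_shift {N : ℕ} : ∀ (m : ℕ) (β : Fin m → ZMod N) (c : Fin m → Bool) (t : ZMod N),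
    cRun m (fun i => β i + t) c = (cRun m β c).image (· + t)
  | 0, _, _, _ => by simp [cRun]
  | m + 1, β, c, t => by
      have ih := cRun_shift m (β ∘ Fin.castSucc) (c ∘ Fin.castSucc) t
      have hc : (fun i => β i + t) ∘ Fin.castSucc = fun i => (β ∘ Fin.castSucc) i + t := rfl
      rw [cRun_succ, cRun_succ, Finset.image_insert, hc, ih, cP_shift]

lemma cRun_mem {N : ℕ} : ∀ (m : ℕ) (β : Fin m → ZMod N) (c : Fin m → Bool) (i : Fin m),
    β i ∈ cRun m β c
  | m + 1, β, c, i => by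
      rw [cRun_succ]
      induction i using Fin.lastCases with
      | last => exact cP_mem_insert _ _ _
      | cast j =>
        exact mem_insert_of_mem (cRun_mem m (β ∘ Fin.castSucc) (c ∘ Fin.castSucc) j)

lemma cRun_card {N : ℕ} [NeZero N] : ∀ (m : ℕ), m ≤ N → ∀ (β : Fin m → ZMod N) (c : Fin m → Bool),
    (cRun m β c).card = m
  | 0, _, _, _ => by simp [cRun]
  | m + 1, hm, β, c => by
      have ih := cRun_card m (Nat.le_of_succ_le hm) (β ∘ Fin.castSucc) (c ∘ Fin.castSucc)
      rw [cRun_succ]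
      set occ := cRun m (β ∘ Fin.castSucc) (c ∘ Fin.castSucc) with hocc
      have hne : ∃ x : ZMod N, x ∉ occ := by
        by_contra hfull
        push_neg at hfull
        have : (univ : Finset (ZMod N)) ⊆ occ := fun x _ => hfull x
        have hcard := Finset.card_le_card this
        rw [ih, Finset.card_univ, ZMod.card] at hcard
        omega
      obtain ⟨x, hx⟩ := hne
      have hex : ∃ k : ℕ, β (Fin.last m) + (if c (Fin.last m) then 1 else -1) * (k : ZMod N) ∉ occ := by
        cases hcb : c (Fin.last m)
        · exact ⟨(β (Fin.last m) - x).val, by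
            rw [if_neg (by simp), neg_one_mul, ZMod.natCast_zmod_val]; simpa using hx⟩
        · exact ⟨(x - β (Fin.last m)).val, by
            rw [if_pos rfl, one_mul, ZMod.natCast_zmod_val]; simpa using hx⟩
      rw [Finset.card_insert_of_notMem (cP_not_mem hex), ih]

def ι {n : ℕ} (a : Fin n) : ZMod (n+1) := ((a : ℕ) : ZMod (n+1))

lemma ι_val {n : ℕ} (a : Fin n) : (ι a).val = (a : ℕ) :=
  ZMod.val_natCast_of_lt (lt_trans a.isLt (Nat.lt_succ_self n))

lemma ι_inj {n : ℕ} : Function.Injective (ι (n := n)) := by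
  intro a b h
  apply Fin.ext
  rw [← ι_val a, ← ι_val b, h]

lemma mem_imageι {n : ℕ} {occ : Finset (Fin n)} {b : Fin n} :
    ι b ∈ occ.image ι ↔ b ∈ occ := by
  constructor
  · intro h; obtain ⟨x, hx, he⟩ := Finset.mem_image.mp h; rwa [← ι_inj he]
  · exact fun h => Finset.mem_image_of_mem _ h

lemma last_not_mem_imageι {n : ℕ} (occ : Finset (Fin n)) :
    ((n : ℕ) : ZMod (n+1)) ∉ occ.image ι := by
  intro h
  obtain ⟨x, hx, he⟩ := Finset.mem_image.mp h
  have h2 := congrArg ZMod.val he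
  rw [ι_val, ZMod.val_natCast_of_lt (Nat.lt_succ_self n)] at h2
  exact absurd h2 (Nat.ne_of_lt x.isLt)

lemma linRun_succ (n m : ℕ) (α : Fin (m+1) → Fin n) (c : Fin (m+1) → Bool) :
    linRun n (m+1) α c = (linRun n m (α ∘ Fin.castSucc) (c ∘ Fin.castSucc)).bind
      (fun occ => (linPark n occ (α (Fin.last m)) (c (Fin.last m))).map
        (fun s => insert s occ)) := by
  unfold linRun
  rw [List.finRange_succ_last, List.foldl_append, List.foldl_map]
  rfl

lemma step_some {n : ℕ} {occ : Finset (Fin n)} {a : Fin n} {fwd : Bool} {s : Fin n}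
    (h : linPark n occ a fwd = some s) :
    cP (occ.image ι) (ι a) (if fwd then 1 else -1) = ι s := by
  by_cases ha : a ∈ occ
  · simp only [linPark, if_neg (not_not.mpr ha)] at h
    cases fwd
    · -- backward
      rw [if_neg (by simp)]
      set cand := univ.filter fun t : Fin n => (if (false : Bool) then a < t else t < a) ∧ t ∉ occ
        with hcand
      by_cases hne : cand.Nonempty
      · rw [dif_pos hne, if_neg (by simp)] at h
        have hs : cand.max' hne = s := Option.some_injective _ h
        have hsmem : s ∈ cand := hs ▸ Finset.max'_mem cand hne
        obtain ⟨-, hlt, hnocc⟩ := Finset.mem_filter.mp hsmem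
        rw [if_neg (by simp)] at hlt
        have hav : (s : ℕ) < (a : ℕ) := hlt
        have harith : ι a + (-1) * (((a : ℕ) - (s : ℕ) : ℕ) : ZMod (n+1)) = ι s := by
          rw [neg_one_mul, ← sub_eq_add_neg, sub_eq_iff_eq_add]
          unfold ι
          rw [← Nat.cast_add]
          congr 1
          omega
        rw [cP_eq (k := (a : ℕ) - (s : ℕ)) ?_ ?_, harith]
        · rw [harith]
          exact fun hm => hnocc (mem_imageι.mp hm)
        · intro j hj
          have hjle : j ≤ (a : ℕ) := by omega
          have hxn : (a : ℕ) - j < n := lt_of_le_of_lt (Nat.sub_le _ _) a.isLt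
          set t : Fin n := ⟨(a : ℕ) - j, hxn⟩ with ht
          have harith2 : ι a + (-1) * (j : ZMod (n+1)) = ι t := by
            rw [neg_one_mul, ← sub_eq_add_neg, sub_eq_iff_eq_add]
            unfold ι
            rw [← Nat.cast_add]
            congr 1
            show (a : ℕ) = ((a : ℕ) - j) + j
            omega
          rw [harith2, mem_imageι]
          rcases Nat.eq_zero_or_pos j with hj0 | hjpos
          · have hta : t = a := Fin.ext (by simp [ht, hj0])
            rwa [hta]
          · by_contra htocc
            have htcand : t ∈ cand := Finset.mem_filter.mpr
              ⟨mem_univ _, by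
                rw [if_neg (by simp)]
                have hv : (a:ℕ) - j < (a:ℕ) := by omega
                exact ⟨hv, htocc⟩⟩
            have hle := Finset.le_max' cand t htcand
            rw [hs] at hle
            have : (a : ℕ) - j ≤ (s : ℕ) := hle
            omega
      · rw [dif_neg hne] at h; exact absurd h (by simp)
    · -- forward
      rw [if_pos rfl]
      set cand := univ.filter fun t : Fin n => (if (true : Bool) then a < t else t < a) ∧ t ∉ occ
        with hcand
      by_cases hne : cand.Nonempty
      · rw [dif_pos hne, if_pos rfl] at h
        have hs : cand.min' hne = s := Option.some_injective _ h
        have hsmem : s ∈ cand := hs ▸ Finset.min'_mem cand hne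
        obtain ⟨-, hlt, hnocc⟩ := Finset.mem_filter.mp hsmem
        rw [if_pos rfl] at hlt
        have hav : (a : ℕ) < (s : ℕ) := hlt
        have harith : ι a + 1 * (((s : ℕ) - (a : ℕ) : ℕ) : ZMod (n+1)) = ι s := by
          rw [one_mul]
          unfold ι
          rw [← Nat.cast_add]
          congr 1
          omega
        rw [cP_eq (k := (s : ℕ) - (a : ℕ)) ?_ ?_, harith]
        · rw [harith]
          exact fun hm => hnocc (mem_imageι.mp hm)
        · intro j hj
          have hxn : (a : ℕ) + j < n := lt_trans (by omega) s.isLt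
          set t : Fin n := ⟨(a : ℕ) + j, hxn⟩ with ht
          have harith2 : ι a + 1 * (j : ZMod (n+1)) = ι t := by
            rw [one_mul]
            unfold ι
            rw [← Nat.cast_add]
          rw [harith2, mem_imageι]
          rcases Nat.eq_zero_or_pos j with hj0 | hjpos
          · have hta : t = a := Fin.ext (by simp [ht, hj0])
            rwa [hta]
          · by_contra htocc
            have htcand : t ∈ cand := Finset.mem_filter.mpr
              ⟨mem_univ _, by
                rw [if_pos rfl]
                have hv : (a:ℕ) < (a:ℕ) + j := by omega
                exact ⟨hv, htocc⟩⟩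
            have hle := Finset.min'_le cand t htcand
            rw [hs] at hle
            have : (s : ℕ) ≤ (a : ℕ) + j := hle
            omega
      · rw [dif_neg hne] at h; exact absurd h (by simp)
  · simp only [linPark, if_pos ha] at h
    have hsa : a = s := Option.some_injective _ h
    subst hsa
    exact cP_self (fun hm => ha (mem_imageι.mp hm))

lemma step_none {n : ℕ} {occ : Finset (Fin n)} {a : Fin n} {fwd : Bool}
    (h : linPark n occ a fwd = none) :
    cP (occ.image ι) (ι a) (if fwd then 1 else -1) = ((n : ℕ) : ZMod (n+1)) := by
  have ha : a ∈ occ := by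
    by_contra ha
    rw [linPark, if_pos ha] at h
    exact Option.some_ne_none a h
  simp only [linPark, if_neg (not_not.mpr ha)] at h
  cases fwd
  · -- backward, k = a.val + 1
    rw [if_neg (by simp)]
    set cand := univ.filter fun t : Fin n => (if (false : Bool) then a < t else t < a) ∧ t ∉ occ
      with hcand
    by_cases hne : cand.Nonempty
    · rw [dif_pos hne] at h; exact absurd h (by simp)
    have hall : ∀ t : Fin n, t < a → t ∈ occ := by
      intro t hlt
      by_contra htocc
      exact hne ⟨t, Finset.mem_filter.mpr ⟨mem_univ _, by rw [if_neg (by simp)]; exact ⟨hlt, htocc⟩⟩⟩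
    have hlastval : ((n : ℕ) : ZMod (n+1)) = -1 := by
      have h0 : (((n+1 : ℕ)) : ZMod (n+1)) = 0 := ZMod.natCast_self (n+1)
      rw [Nat.cast_add, Nat.cast_one] at h0
      linear_combination h0
    have harith : ι a + (-1) * (((a : ℕ) + 1 : ℕ) : ZMod (n+1)) = ((n : ℕ) : ZMod (n+1)) := by
      rw [hlastval, neg_one_mul, Nat.cast_add, Nat.cast_one]
      unfold ι
      ring
    rw [cP_eq (k := (a : ℕ) + 1) ?_ ?_, harith]
    · rw [harith, hlastval, ← hlastval]
      exact last_not_mem_imageι occ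
    · intro j hj
      have hjle : j ≤ (a : ℕ) := by omega
      have hxn : (a : ℕ) - j < n := lt_of_le_of_lt (Nat.sub_le _ _) a.isLt
      set t : Fin n := ⟨(a : ℕ) - j, hxn⟩ with ht
      have harith2 : ι a + (-1) * (j : ZMod (n+1)) = ι t := by
        rw [neg_one_mul, ← sub_eq_add_neg, sub_eq_iff_eq_add]
        unfold ι
        rw [← Nat.cast_add]
        congr 1
        show (a : ℕ) = ((a : ℕ) - j) + j
        omega
      rw [harith2, mem_imageι]
      rcases Nat.eq_zero_or_pos j with hj0 | hjpos
      · have hta : t = a := Fin.ext (by simp [ht, hj0])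
        rwa [hta]
      · refine hall t ?_
        have hv : (a:ℕ) - j < (a:ℕ) := by omega
        exact hv
  · -- forward, k = n - a.val
    rw [if_pos rfl]
    set cand := univ.filter fun t : Fin n => (if (true : Bool) then a < t else t < a) ∧ t ∉ occ
      with hcand
    by_cases hne : cand.Nonempty
    · rw [dif_pos hne] at h; exact absurd h (by simp)
    have hall : ∀ t : Fin n, a < t → t ∈ occ := by
      intro t hlt
      by_contra htocc
      exact hne ⟨t, Finset.mem_filter.mpr ⟨mem_univ _, by rw [if_pos rfl]; exact ⟨hlt, htocc⟩⟩⟩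
    have harith : ι a + 1 * ((n - (a : ℕ) : ℕ) : ZMod (n+1)) = ((n : ℕ) : ZMod (n+1)) := by
      rw [one_mul]
      unfold ι
      rw [← Nat.cast_add]
      congr 1
      have := a.isLt
      omega
    rw [cP_eq (k := n - (a : ℕ)) ?_ ?_, harith]
    · rw [harith]
      exact last_not_mem_imageι occ
    · intro j hj
      have hxn : (a : ℕ) + j < n := by omega
      set t : Fin n := ⟨(a : ℕ) + j, hxn⟩ with ht
      have harith2 : ι a + 1 * (j : ZMod (n+1)) = ι t := by
        rw [one_mul]
        unfold ι
        rw [← Nat.cast_add]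
      rw [harith2, mem_imageι]
      rcases Nat.eq_zero_or_pos j with hj0 | hjpos
      · have hta : t = a := Fin.ext (by simp [ht, hj0])
        rwa [hta]
      · refine hall t ?_
        have hv : (a:ℕ) < (a:ℕ) + j := by omega
        exact hv

lemma dich (n : ℕ) : ∀ (m : ℕ) (α : Fin m → Fin n) (c : Fin m → Bool),
    (∃ occ, linRun n m α c = some occ ∧
      cRun m (fun i => ι (α i)) c = occ.image ι) ∨
    (linRun n m α c = none ∧ ((n : ℕ) : ZMod (n+1)) ∈ cRun m (fun i => ι (α i)) c) := by
  intro m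
  induction m with
  | zero =>
    intro α c
    left
    exact ⟨∅, rfl, by simp [cRun]⟩
  | succ m ih =>
    intro α c
    rw [linRun_succ]
    have hcomp : (fun i : Fin (m+1) => ι (α i)) ∘ Fin.castSucc
        = fun i : Fin m => ι ((α ∘ Fin.castSucc) i) := rfl
    rcases ih (α ∘ Fin.castSucc) (c ∘ Fin.castSucc) with ⟨occ, hrun, hcirc⟩ | ⟨hrun, hmem⟩
    · cases hpark : linPark n occ (α (Fin.last m)) (c (Fin.last m)) with
      | none =>
        right
        constructor
        · rw [hrun]; simp [hpark]
        · rw [cRun_succ, hcomp, hcirc]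
          rw [step_none hpark]
          exact mem_insert_self _ _
      | some s =>
        left
        refine ⟨insert s occ, by rw [hrun]; simp [hpark], ?_⟩
        rw [cRun_succ, hcomp, hcirc]
        rw [step_some hpark, Finset.image_insert]
    · right
      constructor
      · rw [hrun]; rfl
      · rw [cRun_succ, hcomp]
        exact mem_insert_of_mem hmem

lemma parks_iff (n : ℕ) (α : Fin n → Fin n) (c : Fin n → Bool) :
    linParks n n α c ↔ ((n : ℕ) : ZMod (n+1)) ∉ cRun n (fun i => ι (α i)) c := by
  rcases dich n n α c with ⟨occ, hrun, hcirc⟩ | ⟨hrun, hmem⟩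
  · constructor
    · intro _
      rw [hcirc]
      exact last_not_mem_imageι occ
    · intro _
      show (linRun n n α c).isSome = true
      rw [hrun]; rfl
  · constructor
    · intro hp
      exfalso
      have : (linRun n n α c).isSome = true := hp
      rw [hrun] at this; exact Bool.noConfusion this
    · intro hnm
      exact absurd hmem hnm

lemma fiber_card_shift (n : ℕ) (c : Fin n → Bool) (j t : ZMod (n+1)) :
    #(univ.filter fun β : Fin n → ZMod (n+1) => j ∉ cRun n β c)
      = #(univ.filter fun β : Fin n → ZMod (n+1) => j + t ∉ cRun n β c) := by
  apply Finset.card_bij' (fun β _ => fun i => β i + t) (fun β _ => fun i => β i - t)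
  · intro β hβ
    rw [mem_filter] at hβ ⊢
    refine ⟨mem_univ _, ?_⟩
    rw [cRun_shift n β c t]
    intro hmem
    exact hβ.2 (mem_image_addt.mp hmem)
  · intro β hβ
    rw [mem_filter] at hβ ⊢
    refine ⟨mem_univ _, ?_⟩
    intro hmem
    apply hβ.2
    have h2 : cRun n (fun i => (fun i => β i - t) i + t) c = cRun n β c := by
      congr 1; funext i; ring
    rw [← h2, cRun_shift n _ c t]
    exact mem_image_addt.mpr hmem
  · intro β _; funext i; ring
  · intro β _; funext i; ring

lemma card_last (n : ℕ) (hn : 0 < n) (c : Fin n → Bool) :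
    #(univ.filter fun β : Fin n → ZMod (n+1) => ((n:ℕ) : ZMod (n+1)) ∉ cRun n β c)
      = (n+1)^(n-1) := by
  have hsum : ∑ j : ZMod (n+1), #(univ.filter fun β : Fin n → ZMod (n+1) => j ∉ cRun n β c)
      = (n+1)^n := by
    have h1 : ∀ j : ZMod (n+1), #(univ.filter fun β : Fin n → ZMod (n+1) => j ∉ cRun n β c)
        = ∑ β : Fin n → ZMod (n+1), if j ∉ cRun n β c then 1 else 0 := by
      intro j; rw [Finset.card_filter]
    rw [Finset.sum_congr rfl (fun j _ => h1 j), Finset.sum_comm]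
    have h2 : ∀ β : Fin n → ZMod (n+1),
        (∑ j : ZMod (n+1), if j ∉ cRun n β c then 1 else 0) = 1 := by
      intro β
      rw [← Finset.card_filter]
      have h3 : (univ.filter fun j : ZMod (n+1) => j ∉ cRun n β c) = (cRun n β c)ᶜ := by
        ext x; simp
      rw [h3, Finset.card_compl, cRun_card n (Nat.le_succ n) β c]
      simp [ZMod.card]
    rw [Finset.sum_congr rfl (fun β _ => h2 β), Finset.sum_const, Finset.card_univ]
    simp [Fintype.card_fun, ZMod.card]
  have hconst : ∀ j : ZMod (n+1),
      #(univ.filter fun β : Fin n → ZMod (n+1) => j ∉ cRun n β c)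
        = #(univ.filter fun β : Fin n → ZMod (n+1) => ((n:ℕ) : ZMod (n+1)) ∉ cRun n β c) := by
    intro j
    have := fiber_card_shift n c ((n:ℕ) : ZMod (n+1)) (j - ((n:ℕ) : ZMod (n+1)))
    rw [show ((n:ℕ) : ZMod (n+1)) + (j - ((n:ℕ) : ZMod (n+1))) = j by ring] at this
    exact this.symm
  rw [Finset.sum_congr rfl (fun j _ => hconst j), Finset.sum_const, Finset.card_univ,
    ZMod.card, smul_eq_mul] at hsum
  have hpow : (n+1)^n = (n+1) * (n+1)^(n-1) := by
    have h := pow_succ' (n+1) (n-1)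
    rw [show n - 1 + 1 = n from by omega] at h
    exact h
  rw [hpow] at hsum
  exact Nat.eq_of_mul_eq_mul_left (Nat.succ_pos n) hsum

lemma card_parks (n : ℕ) (c : Fin n → Bool) :
    #(univ.filter fun α : Fin n → Fin n => linParks n n α c)
      = #(univ.filter fun β : Fin n → ZMod (n+1) => ((n:ℕ) : ZMod (n+1)) ∉ cRun n β c) := by
  apply Finset.card_bij (fun α _ => fun i => ι (α i))
  · intro α hα
    rw [mem_filter] at hα ⊢
    exact ⟨mem_univ _, (parks_iff n α c).mp hα.2⟩
  · intro α1 h1 α2 h2 he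
    funext i
    exact ι_inj (congrFun he i)
  · intro β hβ
    rw [mem_filter] at hβ
    have hne : ∀ i, β i ≠ ((n:ℕ) : ZMod (n+1)) := by
      intro i he
      exact hβ.2 (he ▸ cRun_mem n β c i)
    have hval : ∀ i, (β i).val < n := by
      intro i
      have h1 : (β i).val < n + 1 := ZMod.val_lt _
      rcases Nat.lt_or_ge (β i).val n with h | h
      · exact h
      · exfalso
        apply hne i
        rw [← ZMod.natCast_zmod_val (β i)]
        congr 1
        omega
    have hβeq : (fun i => ι (⟨(β i).val, hval i⟩ : Fin n)) = β := by
      funext i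
      exact ZMod.natCast_zmod_val (β i)
    refine ⟨fun i => ⟨(β i).val, hval i⟩, ?_, hβeq⟩
    rw [mem_filter]
    refine ⟨mem_univ _, ?_⟩
    rw [parks_iff]
    rw [show (fun i => ι ((fun i => (⟨(β i).val, hval i⟩ : Fin n)) i)) = β from hβeq]
    exact hβ.2

lemma coin_sum (p : ℝ) (m : ℕ) : ∑ c : Fin m → Bool, coinWeight p c = 1 := by
  unfold coinWeight
  have key := Fintype.prod_sum (ι := Fin m) (κ := fun _ => Bool)
    (f := fun _ b => if b then p else 1 - p)
  rw [← key]
  have h : ∀ i : Fin m, (∑ b : Bool, if b then p else 1 - p) = 1 := by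
    intro i
    rw [Fintype.sum_bool]
    norm_num
  rw [Finset.prod_congr rfl (fun i _ => h i), Finset.prod_const_one]

end ParkingProof


/-- **Theorem 1.** Under the probabilistic parking protocol with forward probability `p`,
the probability that a uniformly random preference vector `α ∈ [n]^n` is a parking
function equals `(n+1)^(n-1)/n^n`, independently of `p`. -/
theorem prob_parking_function (n : ℕ) (p : ℝ) (hp0 : 0 ≤ p) (hp1 : p ≤ 1) :
    (∑ α : Fin n → Fin n, ∑ c : Fin n → Bool,
        coinWeight p c * (if linParks n n α c then 1 else 0)) / (n : ℝ) ^ n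
      = ((n : ℝ) + 1) ^ (n - 1) / (n : ℝ) ^ n := by
  rcases Nat.eq_zero_or_pos n with hn | hn
  · subst hn
    norm_num
    have h2 : linParks 0 0 default default := by
      show (linRun 0 0 _ _).isSome = true
      rfl
    simp [h2, coinWeight]
    exact h2
  · congr 1
    rw [Finset.sum_comm]
    have hterm : ∀ c : Fin n → Bool,
        (∑ α : Fin n → Fin n, coinWeight p c * (if linParks n n α c then (1:ℝ) else 0))
          = coinWeight p c * (((n+1)^(n-1) : ℕ) : ℝ) := by
      intro c
      rw [← Finset.mul_sum]
      congr 1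
      rw [Finset.sum_boole]
      norm_cast
      rw [ParkingProof.card_parks n c, ParkingProof.card_last n hn c]
    rw [Finset.sum_congr rfl (fun c _ => hterm c), ← Finset.sum_mul,
      ParkingProof.coin_sum p n, one_mul]
    push_cast
    ring
end

section
/- Consider n cars parking on a circle with n+1 spots under the probabilistic protocol with any parameter p. A preference vector α ∈ [n+1]^n results in all n cars parking within spots 1,...,n of the corresponding one-way street (i.e., α is a parking function) if and only if spot n+1 is left vacant after all n cars park on the circle. -/
open Finset

open Fin.NatCast in
/-- One step of the probabilistic parking protocol on a circle with `n+1` spots: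
a car with preference `a` parks there if empty; otherwise it searches clockwise
(if `fwd = true`) or counterclockwise (if `fwd = false`) for the nearest empty spot.
(If all spots are occupied, which never happens with at most `n` cars, it returns `a`.) -/
def circPark (n : ℕ) (occ : Finset (Fin (n + 1))) (a : Fin (n + 1)) (fwd : Bool) :
    Fin (n + 1) :=
  let cand : Finset ℕ :=
    (Finset.range (n + 1)).filter fun t =>
      (if fwd then a + (t : Fin (n + 1)) else a - (t : Fin (n + 1))) ∉ occ
  if h : cand.Nonempty then
    if fwd then a + ((cand.min' h : ℕ) : Fin (n + 1)) else a - ((cand.min' h : ℕ) : Fin (n + 1))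
  else a

/-- Run the circular protocol for all `m` cars in order; returns the occupied set. -/
def circRun (n m : ℕ) (α : Fin m → Fin (n + 1)) (c : Fin m → Bool) : Finset (Fin (n + 1)) :=
  (List.finRange m).foldl (fun occ i => insert (circPark n occ (α i) (c i)) occ) ∅

/-!
While spot `n + 1` is vacant, cutting the circle open at `n + 1` turns it into the one-way
street `1, …, n`: a car that finds an empty spot on the street in its search direction parks
there on the circle too, and a car whose search would run off the street (forward past `n`, or
backward past `1`, which on the circle wraps around) parks at `n + 1` instead. So spot `n + 1`
stays vacant exactly as long as every car succeeds on the street. No car can prefer `n + 1`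
then, since every preferred spot ends up occupied.
-/

section CircleSearch

open Fin.NatCast

variable {n : ℕ}

def circRay (a : Fin (n + 1)) (fwd : Bool) (t : ℕ) : Fin (n + 1) :=
  if fwd then a + t else a - t

theorem val_circRay_true (a : Fin (n + 1)) {t : ℕ} (h : (a : ℕ) + t ≤ n) :
    (circRay a true t : ℕ) = a + t := by
  rw [circRay, if_pos rfl, Fin.val_add, Fin.val_natCast, Nat.mod_eq_of_lt (by omega : t < n + 1),
    Nat.mod_eq_of_lt (by omega)]

theorem val_circRay_false (a : Fin (n + 1)) {t : ℕ} (h : t ≤ a) :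
    (circRay a false t : ℕ) = a - t := by
  rw [circRay, if_neg Bool.false_ne_true, Fin.val_sub, Fin.val_natCast,
    Nat.mod_eq_of_lt (by omega : t < n + 1), show n + 1 - t + a = a - t + (n + 1) by omega,
    Nat.add_mod_right, Nat.mod_eq_of_lt (by omega)]

theorem circRay_false_val_add_one (a : Fin (n + 1)) (ha : (a : ℕ) < n) :
    circRay a false (a + 1) = Fin.last n := by
  refine Fin.ext ?_
  rw [circRay, if_neg Bool.false_ne_true, Fin.val_sub, Fin.val_natCast, Fin.val_last,
    Nat.mod_eq_of_lt (by omega : (a : ℕ) + 1 < n + 1), Nat.mod_eq_of_lt (by omega)]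
  omega

variable {occ : Finset (Fin (n + 1))} {a : Fin (n + 1)}

theorem circPark_eq_circRay {fwd : Bool} {t : ℕ} (ht : t ≤ n) (hfree : circRay a fwd t ∉ occ)
    (hocc : ∀ u < t, circRay a fwd u ∈ occ) : circPark n occ a fwd = circRay a fwd t := by
  set cand := (range (n + 1)).filter fun u => circRay a fwd u ∉ occ
  have hunfold : circPark n occ a fwd =
      if h : cand.Nonempty then circRay a fwd (cand.min' h) else a := rfl
  have ht_mem : t ∈ cand := mem_filter.2 ⟨mem_range.2 (by omega), hfree⟩
  have hmin : cand.min' ⟨t, ht_mem⟩ = t :=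
    le_antisymm (min'_le _ _ ht_mem) (le_min' _ _ _ fun u hu =>
      not_lt.1 fun hlt => (mem_filter.1 hu).2 (hocc u hlt))
  rw [hunfold, dif_pos ⟨t, ht_mem⟩, hmin]

theorem circPark_of_not_mem (fwd : Bool) (ha : a ∉ occ) : circPark n occ a fwd = a := by
  have h0 : circRay a fwd 0 = a := by cases fwd <;> simp [circRay]
  rw [circPark_eq_circRay (Nat.zero_le n) (h0.symm ▸ ha) (by simp), h0]

theorem circPark_true_eq {x : Fin (n + 1)} (hax : a ≤ x) (hx : x ∉ occ)
    (hocc : ∀ y, a ≤ y → y < x → y ∈ occ) : circPark n occ a true = x := by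
  have hx_eq : circRay a true (x - a) = x := Fin.ext (by rw [val_circRay_true a (by omega)]; omega)
  rw [circPark_eq_circRay (t := x - a) (by omega) (hx_eq.symm ▸ hx), hx_eq]
  intro u hu
  have hval := val_circRay_true a (t := u) (by omega)
  exact hocc _ (Fin.le_def.2 (by omega)) (Fin.lt_def.2 (by omega))

theorem circPark_false_eq {x : Fin (n + 1)} (hxa : x ≤ a) (hx : x ∉ occ)
    (hocc : ∀ y, x < y → y ≤ a → y ∈ occ) : circPark n occ a false = x := by
  have hx_eq : circRay a false (a - x) = x :=
    Fin.ext (by rw [val_circRay_false a (by omega)]; omega)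
  rw [circPark_eq_circRay (t := a - x) (by omega) (hx_eq.symm ▸ hx), hx_eq]
  intro u hu
  have hval := val_circRay_false a (t := u) (by omega)
  exact hocc _ (Fin.lt_def.2 (by omega)) (Fin.le_def.2 (by omega))

theorem circPark_false_eq_last (hlast : Fin.last n ∉ occ) (hocc : ∀ y ≤ a, y ∈ occ) :
    circPark n occ a false = Fin.last n := by
  have ha : (a : ℕ) < n := Fin.val_lt_last fun h => hlast (h ▸ hocc a le_rfl)
  have hwrap := circRay_false_val_add_one a ha
  rw [circPark_eq_circRay (t := a + 1) (by omega) (hwrap.symm ▸ hlast), hwrap]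
  intro u hu
  exact hocc _ (Fin.le_def.2 (by rw [val_circRay_false a (by omega)]; omega))

end CircleSearch

section CutCircle

variable {n : ℕ} {occL : Finset (Fin n)} {a : Fin n}

@[simp]
theorem castSucc_mem_map_castSuccEmb {s : Fin n} :
    s.castSucc ∈ occL.map Fin.castSuccEmb ↔ s ∈ occL :=
  mem_map' Fin.castSuccEmb

@[simp]
theorem last_not_mem_map_castSuccEmb : Fin.last n ∉ occL.map Fin.castSuccEmb := by
  simp [Fin.castSucc_ne_last]

theorem circPark_map_castSuccEmb_false (ha : a ∈ occL) :
    circPark n (occL.map Fin.castSuccEmb) a.castSucc false =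
      ((linPark n occL a false).map Fin.castSucc).getD (Fin.last n) := by
  set cand := univ.filter fun s => s < a ∧ s ∉ occL
  have hlin : linPark n occL a false = if h : cand.Nonempty then some (cand.max' h) else none := by
    rw [linPark, if_neg (not_not.2 ha)]; rfl
  have hbelow : ∀ y : Fin n, y ≤ a → y ∉ occL → y ∈ cand := fun y hya hy =>
    by simp [cand, hy, hya.lt_of_ne (by rintro rfl; exact hy ha)]
  rw [hlin]
  by_cases hne : cand.Nonempty
  · rw [dif_pos hne, Option.map_some, Option.getD_some]
    have hs : cand.max' hne ∈ cand := max'_mem _ _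
    simp only [cand, mem_filter, mem_univ, true_and] at hs
    refine circPark_false_eq (Fin.castSucc_le_castSucc_iff.2 hs.1.le) (by simpa using hs.2) ?_
    intro y hsy hya
    obtain ⟨y, rfl⟩ := Fin.exists_castSucc_eq.2 (hya.trans_lt (Fin.castSucc_lt_last a)).ne
    rw [Fin.castSucc_lt_castSucc_iff] at hsy
    rw [Fin.castSucc_le_castSucc_iff] at hya
    by_contra hy
    exact absurd hsy (not_lt.2 (le_max' cand y (hbelow y hya (by simpa using hy))))
  · rw [dif_neg hne, Option.map_none, Option.getD_none]
    refine circPark_false_eq_last last_not_mem_map_castSuccEmb fun y hya => ?_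
    obtain ⟨y, rfl⟩ := Fin.exists_castSucc_eq.2 (hya.trans_lt (Fin.castSucc_lt_last a)).ne
    rw [Fin.castSucc_le_castSucc_iff] at hya
    by_contra hy
    exact hne ⟨y, hbelow y hya (by simpa using hy)⟩

theorem circPark_map_castSuccEmb_true (ha : a ∈ occL) :
    circPark n (occL.map Fin.castSuccEmb) a.castSucc true =
      ((linPark n occL a true).map Fin.castSucc).getD (Fin.last n) := by
  set cand := univ.filter fun s => a < s ∧ s ∉ occL
  have hlin : linPark n occL a true = if h : cand.Nonempty then some (cand.min' h) else none := by
    rw [linPark, if_neg (not_not.2 ha)]; rfl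
  have habove : ∀ y : Fin n, a ≤ y → y ∉ occL → y ∈ cand := fun y hay hy =>
    by simp [cand, hy, hay.lt_of_ne (by rintro rfl; exact hy ha)]
  rw [hlin]
  by_cases hne : cand.Nonempty
  · rw [dif_pos hne, Option.map_some, Option.getD_some]
    have hs : cand.min' hne ∈ cand := min'_mem _ _
    simp only [cand, mem_filter, mem_univ, true_and] at hs
    refine circPark_true_eq (Fin.castSucc_le_castSucc_iff.2 hs.1.le) (by simpa using hs.2) ?_
    intro y hay hys
    obtain ⟨y, rfl⟩ := Fin.exists_castSucc_eq.2 (hys.trans (Fin.castSucc_lt_last _)).ne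
    rw [Fin.castSucc_lt_castSucc_iff] at hys
    rw [Fin.castSucc_le_castSucc_iff] at hay
    by_contra hy
    exact absurd hys (not_lt.2 (min'_le cand y (habove y hay (by simpa using hy))))
  · rw [dif_neg hne, Option.map_none, Option.getD_none]
    refine circPark_true_eq (Fin.le_last _) last_not_mem_map_castSuccEmb fun y hay hyl => ?_
    obtain ⟨y, rfl⟩ := Fin.exists_castSucc_eq.2 hyl.ne
    rw [Fin.castSucc_le_castSucc_iff] at hay
    by_contra hy
    exact hne ⟨y, habove y hay (by simpa using hy)⟩

theorem circPark_map_castSuccEmb (fwd : Bool) :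
    circPark n (occL.map Fin.castSuccEmb) a.castSucc fwd =
      ((linPark n occL a fwd).map Fin.castSucc).getD (Fin.last n) := by
  by_cases ha : a ∈ occL
  · cases fwd
    exacts [circPark_map_castSuccEmb_false ha, circPark_map_castSuccEmb_true ha]
  · simp [linPark, ha, circPark_of_not_mem]

end CutCircle

section Runs

def circStep (n : ℕ) {m : ℕ} (α : Fin m → Fin (n + 1)) (c : Fin m → Bool) (occ : Finset (Fin (n + 1)))
    (i : Fin m) : Finset (Fin (n + 1)) :=
  insert (circPark n occ (α i) (c i)) occ

def linStep (n : ℕ) {m : ℕ} (β : Fin m → Fin n) (c : Fin m → Bool) (st : Option (Finset (Fin n)))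
    (i : Fin m) : Option (Finset (Fin n)) :=
  st.bind fun occ => (linPark n occ (β i) (c i)).map fun s => insert s occ

variable {n m : ℕ}

theorem circRun_eq_foldl (α : Fin m → Fin (n + 1)) (c : Fin m → Bool) :
    circRun n m α c = (List.finRange m).foldl (circStep n α c) ∅ := rfl

theorem linParks_iff_foldl (β : Fin m → Fin n) (c : Fin m → Bool) :
    linParks n m β c ↔ ((List.finRange m).foldl (linStep n β c) (some ∅)).isSome := Iff.rfl

theorem subset_foldl_circStep (α : Fin m → Fin (n + 1)) (c : Fin m → Bool) (l : List (Fin m))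
    (occ : Finset (Fin (n + 1))) : occ ⊆ l.foldl (circStep n α c) occ := by
  induction l generalizing occ with
  | nil => exact subset_rfl
  | cons i l ih => exact (subset_insert _ _).trans (ih _)

theorem pref_mem_circStep (α : Fin m → Fin (n + 1)) (c : Fin m → Bool)
    (occ : Finset (Fin (n + 1))) (i : Fin m) : α i ∈ circStep n α c occ i := by
  by_cases h : α i ∈ occ
  · exact mem_insert_of_mem h
  · rw [circStep, circPark_of_not_mem _ h]
    exact mem_insert_self _ _

theorem pref_mem_foldl_circStep (α : Fin m → Fin (n + 1)) (c : Fin m → Bool) {l : List (Fin m)}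
    {i : Fin m} (hi : i ∈ l) (occ : Finset (Fin (n + 1))) : α i ∈ l.foldl (circStep n α c) occ := by
  induction l generalizing occ with
  | nil => cases hi
  | cons j l ih =>
    rcases List.mem_cons.1 hi with rfl | hi
    · exact subset_foldl_circStep α c l _ (pref_mem_circStep α c occ i)
    · exact ih hi _

theorem pref_mem_circRun (α : Fin m → Fin (n + 1)) (c : Fin m → Bool) (i : Fin m) :
    α i ∈ circRun n m α c :=
  pref_mem_foldl_circStep α c (List.mem_finRange i) ∅

theorem foldl_linStep_none (β : Fin m → Fin n) (c : Fin m → Bool) (l : List (Fin m)) :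
    l.foldl (linStep n β c) none = none := by
  induction l with
  | nil => rfl
  | cons i l ih => exact ih

theorem last_not_mem_foldl_circStep_iff (β : Fin m → Fin n) (c : Fin m → Bool)
    (l : List (Fin m)) (occL : Finset (Fin n)) :
    Fin.last n ∉ l.foldl (circStep n (fun i => (β i).castSucc) c) (occL.map Fin.castSuccEmb) ↔
      (l.foldl (linStep n β c) (some occL)).isSome := by
  induction l generalizing occL with
  | nil => simp
  | cons i l ih =>
    rw [List.foldl_cons, List.foldl_cons, circStep, circPark_map_castSuccEmb, linStep,
      Option.bind_some]
    cases linPark n occL (β i) (c i) with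
    | none =>
      rw [Option.map_none, Option.getD_none, Option.map_none, foldl_linStep_none]
      simpa using subset_foldl_circStep _ c l _ (mem_insert_self _ _)
    | some s =>
      rw [Option.map_some, Option.getD_some, Option.map_some, ← ih, ← Fin.coe_castSuccEmb,
        ← map_insert]

theorem last_not_mem_circRun_castSucc_iff (β : Fin m → Fin n) (c : Fin m → Bool) :
    Fin.last n ∉ circRun n m (fun i => (β i).castSucc) c ↔ linParks n m β c := by
  simpa [circRun_eq_foldl, linParks_iff_foldl] using
    last_not_mem_foldl_circStep_iff β c (List.finRange m) ∅

theorem last_not_mem_circRun_iff_linParks (α : Fin m → Fin (n + 1)) (c : Fin m → Bool)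
    (h : ∀ i, (α i : ℕ) < n) :
    Fin.last n ∉ circRun n m α c ↔ linParks n m (fun i => ⟨α i, h i⟩) c := by
  have hα : (fun i => (⟨α i, h i⟩ : Fin n).castSucc) = α := funext fun i => Fin.ext rfl
  rw [← last_not_mem_circRun_castSucc_iff, hα]

end Runs

/-- **Lemma (α ∈ PF_n ↔ α ∈ S_{n+1}).** For any fixed realization of coin flips `c`,
a preference vector `α ∈ [n+1]^n` of `n` cars parking on a circle with `n+1` spots
leaves spot `n+1` vacant if and only if all preferences lie in `[n]` and the same cars
with the same coin flips all park on the one-way street with `n` spots, i.e. `α` is a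
parking function. -/
theorem circ_vacant_iff_parking (n : ℕ) (α : Fin n → Fin (n + 1)) (c : Fin n → Bool) :
    Fin.last n ∉ circRun n n α c ↔
      ∃ h : ∀ i, (α i : ℕ) < n, linParks n n (fun i => ⟨(α i : ℕ), h i⟩) c := by
  constructor
  · intro hvac
    have hlt : ∀ i, (α i : ℕ) < n := fun i =>
      Fin.val_lt_last fun h => hvac (h ▸ pref_mem_circRun α c i)
    exact ⟨hlt, (last_not_mem_circRun_iff_linParks α c hlt).1 hvac⟩
  · rintro ⟨hlt, hpark⟩
    exact (last_not_mem_circRun_iff_linParks α c hlt).2 hpark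
end

section
/- For p = 1/2, the distribution Q_{n,1/2} has the closed form Q_{n,1/2}(j) = 1/(n+1) + C(n−1,n−j)·j^(j−2)·(n−j+1)^(n−j−1)/(2(n+1)^(n−1)) for each j ∈ [n]. -/
open Finset

/-!
Abel's identity `(y+m)^m + Σ_{k≥1} C(m,k) x (x+k)^(k-1) (y+m-k)^(m-k) = (x+y+m)^m` follows by
writing `y+m-k = (x+y+m) - (x+k)` and expanding: after exchanging the two sums, each inner sum
over `k` is an `(m-j)`-th finite difference of a polynomial of degree `m-j-1`, hence zero, up to
its `k = 0` term, and these `k = 0` terms reassemble `(y+m)^m` by the binomial theorem.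
Its instances `x = y = 1` and `x = 1, y = 2` combine to `Σ_s abelTerm n s = 2 (n+1)^(n-2)`.
At `p = 1/2` the two sums in `Q` are, up to the factor `1/2`, this full sum minus its term
`s = n - j`, which is the closed form.
-/

/-- The Abel-type summand `C(n−1,s)(n−s)^{n−s−2}(s+1)^{s−1}`, with the powers taken in
`ℝ` with integer exponents (so e.g. `1^{-1} = 1`). -/
noncomputable def abelTerm (n s : ℕ) : ℝ :=
  ((n - 1).choose s : ℝ) * ((n : ℝ) - s) ^ ((n : ℤ) - s - 2) * ((s : ℝ) + 1) ^ ((s : ℤ) - 1)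

/-- `Q_{n,p}(j)`: the (conditional) probability that the last car prefers spot `j ∈ [n]`,
given that all cars park, as established in Theorem 3:
`Q_{n,p}(j) = 2/(n+1) − (1/(n+1)^{n−1})[p·Σ_{s=n−j+1}^{n−1} C(n−1,s)(n−s)^{n−s−2}(s+1)^{s−1}`
`+ (1−p)·Σ_{s=0}^{n−j−1} C(n−1,s)(n−s)^{n−s−2}(s+1)^{s−1}]`. -/
noncomputable def Qform (n : ℕ) (p : ℝ) (j : ℕ) : ℝ :=
  2 / ((n : ℝ) + 1) - (1 / ((n : ℝ) + 1) ^ (n - 1)) *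
    (p * ∑ s ∈ Finset.Icc (n - j + 1) (n - 1), abelTerm n s
      + (1 - p) * ∑ s ∈ Finset.range (n - j), abelTerm n s)

theorem Nat.choose_mul_choose_sub_comm (m k j : ℕ) :
    m.choose k * (m - k).choose j = m.choose j * (m - j).choose k := by
  rcases le_or_gt (k + j) m with h | h
  · have hk := Nat.choose_mul (n := m) (Nat.le_add_right k j)
    have hj := Nat.choose_mul (n := m) (Nat.le_add_left j k)
    rw [Nat.add_sub_cancel_left] at hk
    rw [Nat.add_sub_cancel] at hj
    rw [← hk, ← hj, Nat.choose_symm_add]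
  · have vanish : ∀ a b, m < a + b → m.choose a * (m - a).choose b = 0 := fun a b hab => by
      simp only [mul_eq_zero, Nat.choose_eq_zero_iff]; omega
    rw [vanish k j h, vanish j k (by omega)]

theorem alternating_sum_choose_mul_add_pow_eq_zero {R : Type*} [CommRing R] {N j : ℕ}
    (h : j < N) (x : R) :
    ∑ k ∈ range (N + 1), (-1) ^ (N - k) * (N.choose k : R) * (x + k) ^ j = 0 := by
  have := congrFun (fwdDiff_iter_pow_eq_zero_of_lt (R := R) h) x
  rw [fwdDiff_iter_eq_sum_shift] at this
  simpa [zsmul_eq_mul] using this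

theorem Finset.range_add_one_eq_insert_zero_Icc (m : ℕ) : range (m + 1) = insert 0 (Icc 1 m) := by
  ext; simp; omega

theorem abel_identity {R : Type*} [CommRing R] (m : ℕ) (x y : R) :
    (y + m) ^ m
        + ∑ k ∈ Icc 1 m, (m.choose k : R) * x * (x + k) ^ (k - 1) * (y + m - k) ^ (m - k)
      = (x + y + m) ^ m := by
  set S := x + y + m
  have expand : ∀ k ∈ Icc 1 m,
      (m.choose k : R) * x * (x + k) ^ (k - 1) * (y + m - k) ^ (m - k)
        = ∑ j ∈ range m, x * S ^ j * m.choose j *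
            ((-1) ^ (m - j - k) * ((m - j).choose k : R) * (x + k) ^ (m - j - 1)) := by
    intro k hk
    obtain ⟨hk1, hkm⟩ := mem_Icc.1 hk
    rw [show y + m - k = S + -(x + k) by ring, add_pow S, mul_sum]
    refine (sum_congr rfl fun j hj => ?_).trans
      (sum_subset (range_subset_range.2 (by omega)) fun j _ hj => ?_)
    · have hjk : j ≤ m - k := by simp only [mem_range] at hj; omega
      have tri : (m.choose k : R) * (m - k).choose j = m.choose j * (m - j).choose k := by
        rw [← Nat.cast_mul, ← Nat.cast_mul, Nat.choose_mul_choose_sub_comm]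
      rw [show m - j - k = m - k - j by omega,
        show m - j - 1 = (k - 1) + (m - k - j) by omega, pow_add, neg_pow]
      linear_combination
        (x * (x + k) ^ (k - 1) * S ^ j * (-1) ^ (m - k - j) * (x + k) ^ (m - k - j)) * tri
    · rw [Nat.choose_eq_zero_of_lt (by simp only [mem_range] at hj; omega : m - j < k)]
      simp
  have inner : ∀ j ∈ range m,
      ∑ k ∈ Icc 1 m, x * S ^ j * m.choose j *
          ((-1) ^ (m - j - k) * ((m - j).choose k : R) * (x + k) ^ (m - j - 1))
        = -(S ^ j * (-x) ^ (m - j) * m.choose j) := by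
    intro j hj
    have hjm : j < m := mem_range.1 hj
    have vanishing : ∑ k ∈ range (m + 1),
        (-1) ^ (m - j - k) * ((m - j).choose k : R) * (x + k) ^ (m - j - 1) = 0 := by
      rw [← sum_subset (range_subset_range.2 (by omega : m - j + 1 ≤ m + 1)) fun k _ hk => by
        rw [Nat.choose_eq_zero_of_lt (by simp only [mem_range] at hk; omega : m - j < k)]; simp]
      exact alternating_sum_choose_mul_add_pow_eq_zero (by omega) x
    rw [range_add_one_eq_insert_zero_Icc, sum_insert (by simp)] at vanishing
    obtain ⟨r, hr⟩ : ∃ r, m - j = r + 1 := ⟨m - j - 1, by omega⟩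
    rw [← mul_sum, eq_neg_of_add_eq_zero_right vanishing, hr]
    simp only [Nat.sub_zero, Nat.choose_zero_right, Nat.cast_zero, Nat.cast_one, add_zero,
      Nat.add_sub_cancel]
    ring
  rw [sum_congr rfl expand, sum_comm, sum_congr rfl inner, sum_neg_distrib,
    show y + m = S + -x by ring, add_pow S, sum_range_succ]
  simp

theorem abel_identity_one {R : Type*} [CommRing R] (m : ℕ) (y : R) :
    ∑ k ∈ range (m + 1), (m.choose k : R) * (1 + k) ^ (k - 1) * (y + m - k) ^ (m - k)
      = (1 + y + m) ^ m := by
  rw [range_add_one_eq_insert_zero_Icc, sum_insert (by simp), ← abel_identity m 1 y]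
  simp

theorem sum_choose_mul_pow_mul_pow {R : Type*} [CommRing R] (m : ℕ) :
    ∑ k ∈ range (m + 2),
        ((m + 1).choose k : R) * ((m + 2 : R) - k) ^ (m - k) * ((k : R) + 1) ^ (k - 1)
      = 2 * (m + 3) ^ m := by
  have split_term : ∀ k ∈ range (m + 2),
      ((m + 1).choose k : R) * (1 + k) ^ (k - 1) * (1 + (m + 1 : ℕ) - k) ^ (m + 1 - k)
        = ((m + 1).choose k : R) * ((m + 2 : R) - k) ^ (m - k) * ((k : R) + 1) ^ (k - 1)
          + (m + 1) * ((m.choose k : R) * (1 + k) ^ (k - 1) * (2 + m - k) ^ (m - k)) := by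
    intro k hk
    rcases (show k = m + 1 ∨ k ≤ m by simp only [mem_range] at hk; omega) with rfl | hkm
    · simp [add_comm, add_left_comm]
    · obtain ⟨r, rfl⟩ := Nat.exists_eq_add_of_le hkm
      have hchoose : ((k + r + 1).choose k : R) * (r + 1) = (k + r + 1) * (k + r).choose k := by
        have h := Nat.choose_mul_succ_eq (k + r) k
        rw [show k + r + 1 - k = r + 1 by omega] at h
        have h' := congrArg (Nat.cast : ℕ → R) h
        push_cast at h'
        linear_combination -h'
      rw [show k + r + 1 - k = r + 1 by omega, Nat.add_sub_cancel_left]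
      push_cast
      linear_combination (1 + (k : R)) ^ (k - 1) * ((r : R) + 2) ^ r * hchoose
  have abel_at_one := abel_identity_one (m + 1) (1 : R)
  have abel_at_two :
      ∑ k ∈ range (m + 2), (m.choose k : R) * (1 + k) ^ (k - 1) * (2 + m - k) ^ (m - k)
        = (1 + 2 + m) ^ m := by
    rw [sum_range_succ, abel_identity_one m (2 : R), Nat.choose_succ_self]
    simp
  rw [sum_congr rfl split_term, sum_add_distrib, ← mul_sum, abel_at_two] at abel_at_one
  push_cast at abel_at_one
  linear_combination abel_at_one

theorem zpow_natCast_sub_natCast_eq_pow_tsub {G : Type*} [DivisionMonoid G] {a : G} {p q : ℕ}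
    (h : q ≤ p ∨ a = 1) : a ^ ((p : ℤ) - q) = a ^ (p - q) := by
  rcases h with h | rfl
  · rw [← Nat.cast_sub h, zpow_natCast]
  · simp

/-- The truncated exponents agree with the integer ones of `abelTerm`: the latter are negative
only when the base is `1`. -/
theorem abelTerm_eq (m : ℕ) {s : ℕ} (hs : s ≤ m + 1) :
    abelTerm (m + 2) s
      = ((m + 1).choose s : ℝ) * ((m + 2 : ℝ) - s) ^ (m - s) * ((s : ℝ) + 1) ^ (s - 1) := by
  have hbase : s ≤ m ∨ (m + 2 : ℝ) - s = 1 := by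
    rcases Nat.lt_or_ge m s with h | h
    · right; rw [show s = m + 1 by omega]; push_cast; ring
    · left; exact h
  have hexp : ((m + 2 : ℕ) : ℤ) - s - 2 = (m : ℤ) - s := by push_cast; ring
  rw [abelTerm, hexp]
  push_cast
  rw [zpow_natCast_sub_natCast_eq_pow_tsub hbase, ← Nat.cast_one (R := ℤ),
    zpow_natCast_sub_natCast_eq_pow_tsub (by rcases s with _ | s <;> simp)]

theorem sum_abelTerm {n : ℕ} (hn : 0 < n) :
    ∑ s ∈ range n, abelTerm n s = 2 * ((n : ℝ) + 1) ^ ((n : ℤ) - 2) := by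
  obtain rfl | ⟨m, rfl⟩ : n = 1 ∨ ∃ m, n = m + 2 := by
    rcases n with _ | _ | m <;> simp_all
  · norm_num [abelTerm]
  · rw [sum_congr rfl fun s hs => abelTerm_eq m (Nat.le_of_lt_succ (mem_range.1 hs)),
      sum_choose_mul_pow_mul_pow, show ((m + 2 : ℕ) : ℤ) - 2 = m by push_cast; ring,
      zpow_natCast]
    push_cast
    ring

theorem Qform_half_closed_form_general (n : ℕ) (j : ℕ) (hj1 : 1 ≤ j) (hjn : j ≤ n) :
    Qform n (1 / 2) j
      = 1 / ((n : ℝ) + 1)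
        + ((n - 1).choose (n - j) : ℝ) * (j : ℝ) ^ ((j : ℤ) - 2)
            * ((n : ℝ) - j + 1) ^ ((n : ℤ) - j - 1) / (2 * ((n : ℝ) + 1) ^ (n - 1)) := by
  have hsplit : ∑ s ∈ range (n - j), abelTerm n s + abelTerm n (n - j)
      + ∑ s ∈ Icc (n - j + 1) (n - 1), abelTerm n s = ∑ s ∈ range n, abelTerm n s := by
    rw [← sum_range_succ, show Icc (n - j + 1) (n - 1) = Ico (n - j + 1) n by ext; simp; omega,
      sum_range_add_sum_Ico _ (by omega)]
  have hterm : abelTerm n (n - j) = ((n - 1).choose (n - j) : ℝ) * (j : ℝ) ^ ((j : ℤ) - 2)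
      * ((n : ℝ) - j + 1) ^ ((n : ℤ) - j - 1) := by
    rw [abelTerm, Nat.cast_sub hjn, Nat.cast_sub hjn]
    ring_nf
  have hpow : ((n : ℝ) + 1) ^ ((n : ℤ) - 2) * ((n : ℝ) + 1) = ((n : ℝ) + 1) ^ (n - 1) := by
    rw [← zpow_add_one₀ (by positivity), ← zpow_natCast, Nat.cast_sub (by omega)]
    ring_nf
  rw [sum_abelTerm (by omega), hterm] at hsplit
  rw [Qform]
  field_simp
  linear_combination (-(n : ℝ) - 1) * hsplit - 2 * hpow

/-- **Closed form at `p = 1/2`.** For each `j ∈ [n]`,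
`Q_{n,1/2}(j) = 1/(n+1) + C(n−1,n−j)·j^(j−2)·(n−j+1)^(n−j−1)/(2(n+1)^(n−1))`,
with powers interpreted in `ℝ` with integer exponents. -/
theorem Qform_half_closed_form (n : ℕ) (hn : 0 < n) (j : ℕ) (hj1 : 1 ≤ j) (hjn : j ≤ n) :
    Qform n (1 / 2) j
      = 1 / ((n : ℝ) + 1)
        + ((n - 1).choose (n - j) : ℝ) * (j : ℝ) ^ ((j : ℤ) - 2)
            * ((n : ℝ) - j + 1) ^ ((n : ℤ) - j - 1) / (2 * ((n : ℝ) + 1) ^ (n - 1)) :=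
  Qform_half_closed_form_general n j hj1 hjn
end

section
/- For any p ∈ [0,1] with p ≠ 1/2, |2p−1|·‖Q_{n,1} − U_n‖_TV ≤ ‖Q_{n,p} − U_n‖_TV ≤ ‖Q_{n,1} − U_n‖_TV, where U_n is the uniform distribution on [n] and ‖·‖_TV is total variation distance. -/
open Finset

/-- Total variation distance between two functions on `[n] = {1,...,n}`. -/
noncomputable def tvDist (n : ℕ) (P Q : ℕ → ℝ) : ℝ :=
  (1 / 2) * ∑ j ∈ Finset.Icc 1 n, |P j - Q j|

/-- The uniform distribution on `[n]`. -/
noncomputable def unifDist (n : ℕ) : ℕ → ℝ := fun _ => 1 / (n : ℝ)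

lemma abelTerm_symm (n s : ℕ) (hn : 1 ≤ n) (hs : s ≤ n - 1) :
    abelTerm n (n - 1 - s) = abelTerm n s := by
  have h1 : s + 1 ≤ n := by omega
  have hc : ((n - 1 - s : ℕ) : ℝ) = (n : ℝ) - ((s : ℝ) + 1) := by
    have : (n - 1 - s : ℕ) = n - (s + 1) := by omega
    rw [this, Nat.cast_sub h1]; push_cast; ring
  have hz : ((n - 1 - s : ℕ) : ℤ) = (n : ℤ) - ((s : ℤ) + 1) := by omega
  unfold abelTerm
  rw [Nat.choose_symm hs, hc, hz,
    show (n : ℝ) - ((n : ℝ) - ((s : ℝ) + 1)) = (s : ℝ) + 1 from by ring,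
    show (n : ℤ) - ((n : ℤ) - ((s : ℤ) + 1)) - 2 = (s : ℤ) - 1 from by ring,
    show (n : ℝ) - ((s : ℝ) + 1) + 1 = (n : ℝ) - (s : ℝ) from by ring,
    show (n : ℤ) - ((s : ℤ) + 1) - 1 = (n : ℤ) - (s : ℤ) - 2 from by ring]
  ring

lemma sum_reflect (n j : ℕ) (hn : 1 ≤ n) (hj1 : 1 ≤ j) (hj2 : j ≤ n) :
    ∑ s ∈ Finset.Icc (n - j + 1) (n - 1), abelTerm n s
      = ∑ s ∈ Finset.range (j - 1), abelTerm n s := by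
  apply Finset.sum_nbij' (i := fun s => n - 1 - s) (j := fun s => n - 1 - s)
  · intro a ha; simp only [Finset.mem_Icc] at ha; simp only [Finset.mem_range]; omega
  · intro a ha; simp only [Finset.mem_range] at ha; simp only [Finset.mem_Icc]; omega
  · intro a ha; simp only [Finset.mem_Icc] at ha; omega
  · intro a ha; simp only [Finset.mem_range] at ha; omega
  · intro a ha; simp only [Finset.mem_Icc] at ha
    exact (abelTerm_symm n a hn (by omega)).symm

lemma Qform_zero_reflect (n j : ℕ) (hn : 1 ≤ n) (hj1 : 1 ≤ j) (hj2 : j ≤ n) :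
    Qform n 0 (n + 1 - j) = Qform n 1 j := by
  unfold Qform
  rw [show n - (n + 1 - j) = j - 1 from by omega, sum_reflect n j hn hj1 hj2]
  ring

lemma Qform_affine (n : ℕ) (p : ℝ) (j : ℕ) :
    Qform n p j = p * Qform n 1 j + (1 - p) * Qform n 0 j := by
  unfold Qform; ring

lemma S_symm (n : ℕ) (hn : 1 ≤ n) :
    ∑ j ∈ Finset.Icc 1 n, |Qform n 0 j - unifDist n j|
      = ∑ j ∈ Finset.Icc 1 n, |Qform n 1 j - unifDist n j| := by
  have h1 : ∑ j ∈ Finset.Icc 1 n, |Qform n 0 j - unifDist n j|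
      = ∑ j ∈ Finset.Icc 1 n, |Qform n 0 (n + 1 - j) - unifDist n (n + 1 - j)| := by
    apply Finset.sum_nbij' (i := fun j => n + 1 - j) (j := fun j => n + 1 - j)
    · intro a ha; simp only [Finset.mem_Icc] at ha ⊢; omega
    · intro a ha; simp only [Finset.mem_Icc] at ha ⊢; omega
    · intro a ha; simp only [Finset.mem_Icc] at ha; omega
    · intro a ha; simp only [Finset.mem_Icc] at ha; omega
    · intro a ha; simp only [Finset.mem_Icc] at ha
      rw [show n + 1 - (n + 1 - a) = a from by omega]
  rw [h1]
  apply Finset.sum_congr rfl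
  intro j hj
  simp only [Finset.mem_Icc] at hj
  rw [Qform_zero_reflect n j hn hj.1 hj.2]
  rfl

/-- **Proposition (sandwich bound for `p ≠ 1/2`).** For any `p ∈ [0,1]` with `p ≠ 1/2`,
`|2p−1|·‖Q_{n,1} − U_n‖_TV ≤ ‖Q_{n,p} − U_n‖_TV ≤ ‖Q_{n,1} − U_n‖_TV`. -/
theorem tv_sandwich (n : ℕ) (hn : 1 ≤ n) (p : ℝ) (hp0 : 0 ≤ p) (hp1 : p ≤ 1)
    (hp : p ≠ 1 / 2) :
    |2 * p - 1| * tvDist n (Qform n 1) (unifDist n) ≤ tvDist n (Qform n p) (unifDist n) ∧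
      tvDist n (Qform n p) (unifDist n) ≤ tvDist n (Qform n 1) (unifDist n) := by
  set S1 := ∑ j ∈ Finset.Icc 1 n, |Qform n 1 j - unifDist n j| with hS1
  set S0 := ∑ j ∈ Finset.Icc 1 n, |Qform n 0 j - unifDist n j| with hS0
  set Sp := ∑ j ∈ Finset.Icc 1 n, |Qform n p j - unifDist n j| with hSp
  have hsym : S0 = S1 := S_symm n hn
  have hdecomp : ∀ j, Qform n p j - unifDist n j
      = p * (Qform n 1 j - unifDist n j) + (1 - p) * (Qform n 0 j - unifDist n j) := by
    intro j; rw [Qform_affine n p j]; ring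
  -- upper bound
  have hub : Sp ≤ p * S1 + (1 - p) * S0 := by
    rw [hSp, hS1, hS0, Finset.mul_sum, Finset.mul_sum, ← Finset.sum_add_distrib]
    apply Finset.sum_le_sum
    intro j _
    rw [hdecomp j]
    calc |p * (Qform n 1 j - unifDist n j) + (1 - p) * (Qform n 0 j - unifDist n j)|
        ≤ |p * (Qform n 1 j - unifDist n j)| + |(1 - p) * (Qform n 0 j - unifDist n j)| :=
          abs_add_le _ _
      _ = p * |Qform n 1 j - unifDist n j| + (1 - p) * |Qform n 0 j - unifDist n j| := by
          rw [abs_mul, abs_mul, abs_of_nonneg hp0, abs_of_nonneg (show (0:ℝ) ≤ 1 - p by linarith)]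
  -- lower bound pieces
  have hlb1 : p * S1 ≤ Sp + (1 - p) * S0 := by
    rw [hSp, hS1, hS0, Finset.mul_sum, Finset.mul_sum, ← Finset.sum_add_distrib]
    apply Finset.sum_le_sum
    intro j _
    have : p * (Qform n 1 j - unifDist n j)
        = (Qform n p j - unifDist n j) - (1 - p) * (Qform n 0 j - unifDist n j) := by
      rw [hdecomp j]; ring
    calc p * |Qform n 1 j - unifDist n j| = |p * (Qform n 1 j - unifDist n j)| := by
          rw [abs_mul, abs_of_nonneg hp0]
      _ ≤ |Qform n p j - unifDist n j| + |(1 - p) * (Qform n 0 j - unifDist n j)| := by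
          rw [this]; exact abs_sub _ _
      _ = |Qform n p j - unifDist n j| + (1 - p) * |Qform n 0 j - unifDist n j| := by
          rw [abs_mul, abs_of_nonneg (show (0:ℝ) ≤ 1 - p by linarith)]
  have hlb2 : (1 - p) * S0 ≤ Sp + p * S1 := by
    rw [hSp, hS1, hS0, Finset.mul_sum, Finset.mul_sum, ← Finset.sum_add_distrib]
    apply Finset.sum_le_sum
    intro j _
    have : (1 - p) * (Qform n 0 j - unifDist n j)
        = (Qform n p j - unifDist n j) - p * (Qform n 1 j - unifDist n j) := by
      rw [hdecomp j]; ring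
    calc (1 - p) * |Qform n 0 j - unifDist n j|
        = |(1 - p) * (Qform n 0 j - unifDist n j)| := by
          rw [abs_mul, abs_of_nonneg (show (0:ℝ) ≤ 1 - p by linarith)]
      _ ≤ |Qform n p j - unifDist n j| + |p * (Qform n 1 j - unifDist n j)| := by
          rw [this]; exact abs_sub _ _
      _ = |Qform n p j - unifDist n j| + p * |Qform n 1 j - unifDist n j| := by
          rw [abs_mul, abs_of_nonneg hp0]
  have habs : |2 * p - 1| * S1 ≤ Sp := by
    rcases abs_cases (2 * p - 1) with ⟨h, _⟩ | ⟨h, _⟩ <;> rw [h] <;> nlinarith [hsym, hlb1, hlb2]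
  constructor
  · show |2 * p - 1| * ((1/2) * S1) ≤ (1/2) * Sp
    nlinarith [abs_nonneg (2 * p - 1)]
  · show (1/2) * Sp ≤ (1/2) * S1
    rw [hsym] at hub; linarith
end

section
/- Suppose n cars park on a circle with n+1 spots, the first car's preference is fixed to spot 1, and the remaining n−1 cars have uniformly random preferences in [n+1]. Then the expected number of preference vectors containing exactly k unlucky cars (0 ≤ k < n) is U_n(k) = n!·Σ_{C_k ⊆ {2,...,n}, |C_k| = k} Π_{i ∈ C_k} (i−1)/((n+1)−(i−1)). Equivalently, Σ_{k=0}^{n−1} U_n(k) q^k = Π_{i=2}^n [(i−1)q + (n+2−i)]. -/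
/-!
Car `i` has `i - 1` unlucky and `(n + 1) - (i - 1)` lucky preferences, independently of the
other cars, so the number of preference vectors whose unlucky cars form the set `C` is the
product of these counts. Since the lucky counts multiply to `n!` over `i = 2, …, n`, factoring
out `n!` gives `U_n(k)`, and summing over `C` with weight `q ^ #C` expands
`Π_{i=2}^n [(i−1)q + (n+2−i)]`.
-/

open Finset

/-- `U_n(k) = n!·Σ_{C ⊆ {2,...,n}, |C| = k} Π_{i ∈ C} (i−1)/((n+1)−(i−1))`:
the expected number of preference vectors in `[n+1]^n` (first car's preference fixed
to spot 1) with exactly `k` unlucky cars. -/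
def Un (n k : ℕ) : ℚ :=
  (n.factorial : ℚ) *
    ∑ C ∈ (Finset.Icc 2 n).powersetCard k,
      ∏ i ∈ C, ((i : ℚ) - 1) / (((n : ℚ) + 1) - ((i : ℚ) - 1))

section ProdIte

variable {ι R : Type*} [DecidableEq ι] {s C : Finset ι}

theorem Finset.prod_ite_mem_of_subset [CommMonoid R] (hC : C ⊆ s) (a b : ι → R) :
    ∏ i ∈ s, (if i ∈ C then a i else b i) = (∏ i ∈ C, a i) * ∏ i ∈ s \ C, b i := by
  simpa [piecewise, inter_eq_right.mpr hC] using prod_piecewise s C a b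

theorem Finset.prod_mul_prod_div_eq_prod_ite [CommGroupWithZero R] (hC : C ⊆ s) (a : ι → R)
    {b : ι → R} (hb : ∀ i ∈ s, b i ≠ 0) :
    (∏ i ∈ s, b i) * ∏ i ∈ C, a i / b i = ∏ i ∈ s, (if i ∈ C then a i else b i) := by
  have hcancel : (∏ i ∈ C, b i) * ∏ i ∈ C, a i / b i = ∏ i ∈ C, a i := by
    rw [← prod_mul_distrib]
    exact prod_congr rfl fun i hi => mul_div_cancel₀ _ (hb i (hC hi))
  rw [prod_ite_mem_of_subset hC, ← prod_sdiff hC, mul_assoc, hcancel, mul_comm]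

theorem Finset.prod_mul_add_eq_sum_powersetCard [CommSemiring R] (s : Finset ι) (a b : ι → R)
    (q : R) :
    ∏ i ∈ s, (a i * q + b i) = ∑ k ∈ range (#s + 1),
      (∑ C ∈ s.powersetCard k, ∏ i ∈ s, if i ∈ C then a i else b i) * q ^ k := by
  rw [prod_add, sum_powerset]
  refine sum_congr rfl fun k _ => ?_
  rw [sum_mul]
  refine sum_congr rfl fun C hC => ?_
  obtain ⟨hsub, rfl⟩ := mem_powersetCard.mp hC
  rw [prod_ite_mem_of_subset hsub, prod_mul_distrib, prod_const]
  ring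

end ProdIte

theorem prod_Icc_two_id_eq_factorial (n : ℕ) : ∏ i ∈ Icc 2 n, i = n.factorial := by
  rw [← prod_Ico_id_eq_factorial]
  refine prod_subset (fun i => by simp only [mem_Icc, mem_Ico]; omega) fun i hi hi' => ?_
  simp only [mem_Icc, mem_Ico] at hi hi'
  omega

theorem prod_Icc_two_reflect (n : ℕ) : ∏ i ∈ Icc 2 n, (n + 2 - i) = ∏ i ∈ Icc 2 n, i :=
  prod_nbij' (fun i => n + 2 - i) (fun i => n + 2 - i)
    (fun i hi => by simp only [mem_Icc] at hi ⊢; omega)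
    (fun i hi => by simp only [mem_Icc] at hi ⊢; omega)
    (fun i hi => by simp only [mem_Icc] at hi; omega)
    (fun i hi => by simp only [mem_Icc] at hi; omega)
    fun _ _ => rfl

theorem prod_lucky_counts_eq_factorial (n : ℕ) :
    ∏ i ∈ Icc 2 n, (((n : ℚ) + 1) - ((i : ℚ) - 1)) = n.factorial := by
  rw [← prod_Icc_two_id_eq_factorial, ← prod_Icc_two_reflect, Nat.cast_prod]
  refine prod_congr rfl fun i hi => ?_
  rw [Nat.cast_sub (by simp only [mem_Icc] at hi; omega)]
  push_cast
  ring

theorem lucky_count_ne_zero {n i : ℕ} (hi : i ∈ Icc 2 n) : ((n : ℚ) + 1) - ((i : ℚ) - 1) ≠ 0 := by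
  have : (i : ℚ) ≤ n := by exact_mod_cast (mem_Icc.mp hi).2
  linarith

theorem Un_eq_sum_prod (n k : ℕ) :
    Un n k = ∑ C ∈ (Icc 2 n).powersetCard k,
      ∏ i ∈ Icc 2 n, (if i ∈ C then (i : ℚ) - 1 else ((n : ℚ) + 1) - ((i : ℚ) - 1)) := by
  rw [Un, mul_sum, ← prod_lucky_counts_eq_factorial]
  exact sum_congr rfl fun C hC =>
    prod_mul_prod_div_eq_prod_ite (mem_powersetCard.mp hC).1 _ fun _ => lucky_count_ne_zero

/-- **Theorem 7 (lucky and unlucky cars).** Suppose `n` cars park on a circle with `n+1`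
spots, the first car's preference fixed to spot 1 and cars `2,...,n` with uniformly
random preferences in `[n+1]`; when car `i` enters, `i−1` spots are occupied, so `i−1`
of its `n+1` possible preferences make it unlucky and `(n+1)−(i−1)` make it lucky.
Then the expected number of preference vectors with exactly `k` unlucky cars
(`0 ≤ k < n`), namely `Σ_{C ⊆ {2,...,n}, |C|=k} Π_{i∈C}(i−1)·Π_{i∉C}((n+1)−(i−1))`,
equals `U_n(k) = n!·Σ_{C} Π_{i ∈ C} (i−1)/((n+1)−(i−1))`; equivalently
`Σ_{k=0}^{n−1} U_n(k) q^k = Π_{i=2}^n [(i−1)q + (n+2−i)]`. -/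
theorem expected_unlucky (n : ℕ) (hn : 1 ≤ n) :
    (∀ k : ℕ, k < n →
        Un n k = ∑ C ∈ (Finset.Icc 2 n).powersetCard k,
          ∏ i ∈ Finset.Icc 2 n,
            (if i ∈ C then (i : ℚ) - 1 else ((n : ℚ) + 1) - ((i : ℚ) - 1))) ∧
      ∀ q : ℚ, ∑ k ∈ Finset.range n, Un n k * q ^ k
        = ∏ i ∈ Finset.Icc 2 n, (((i : ℚ) - 1) * q + (((n : ℚ) + 2) - (i : ℚ))) := by
  refine ⟨fun k _ => Un_eq_sum_prod n k, fun q => ?_⟩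
  have hcard : #(Icc 2 n) + 1 = n := by rw [Nat.card_Icc]; omega
  have hlucky : ∀ i : ℕ, ((n : ℚ) + 2) - i = ((n : ℚ) + 1) - ((i : ℚ) - 1) := fun _ => by ring
  simp only [hlucky, prod_mul_add_eq_sum_powersetCard, hcard, Un_eq_sum_prod]
end
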